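/- arXiv:1507.04017 — 4 statements merged into one kernel-verified Lean document; each statement's English description precedes it below -/
import Mathlib

section
/- For every real v > 1, ∫₀^∞ (1 + t² + t(v + v⁻¹))⁻¹ dt = 2v·log v/(v² − 1). Equivalently, the derivative of (log v)² with respect to w = v + v⁻¹ (for v > 1) equals ∫₀^∞ (1 + t² + tw)⁻¹ dt, and in particular this derivative is completely monotone in w. -/
open MeasureTheory ProbabilityTheory Real Set

noncomputable section

/-- `f` is hyperbolically monotone of order `k` (HM_k). -/
def IsHMk (k : ℕ) (f : ℝ → ℝ) : Prop :=
  (∀ x : ℝ, 0 < x → 0 ≤ f x) ∧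
  ∀ u : ℝ, 0 < u → ∃ h : ℝ → ℝ,
    (∀ v : ℝ, 0 < v → f (u * v) * f (u / v) = h (v + v⁻¹)) ∧
    (∀ j : ℕ, j + 1 < k → ∀ w ∈ Set.Ioi (2 : ℝ),
      DifferentiableWithinAt ℝ (iteratedDerivWithin j h (Set.Ioi 2)) (Set.Ioi 2) w) ∧
    (∀ j : ℕ, j < k → ∀ w ∈ Set.Ioi (2 : ℝ),
      0 ≤ (-1 : ℝ) ^ j * iteratedDerivWithin j h (Set.Ioi 2) w) ∧
    AntitoneOn (fun w => (-1 : ℝ) ^ (k - 1) * iteratedDerivWithin (k - 1) h (Set.Ioi 2) w)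
      (Set.Ioi 2)

/-- `f` is hyperbolically completely monotone (HCM): HM_k for every k ≥ 1. -/
def IsHCM (f : ℝ → ℝ) : Prop := ∀ k : ℕ, 1 ≤ k → IsHMk k f

/-- `μ` is a generalized gamma convolution (GGC). -/
def IsGGC (μ : Measure ℝ) : Prop :=
  IsProbabilityMeasure μ ∧ μ (Set.Iio 0) = 0 ∧
  ∃ (a : ℝ) (U : Measure ℝ), 0 ≤ a ∧ U (Set.Iic 0) = 0 ∧
    (∫⁻ t in Set.Ioo (0 : ℝ) 1, ENNReal.ofReal |Real.log t| ∂U) < ⊤ ∧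
    (∫⁻ t in Set.Ioi (1 : ℝ), ENNReal.ofReal t⁻¹ ∂U) < ⊤ ∧
    ∀ s : ℝ, 0 ≤ s →
      (∫ x, Real.exp (-(s * x)) ∂μ) =
        Real.exp (-(a * s) + ∫ t, Real.log (t / (t + s)) ∂U)

/-- `g` is completely monotone on `s`. -/
def CompletelyMonotoneOn (g : ℝ → ℝ) (s : Set ℝ) : Prop :=
  ContDiffOn ℝ (⊤ : ℕ∞) g s ∧
  ∀ n : ℕ, ∀ x ∈ s, 0 ≤ (-1 : ℝ) ^ n * iteratedDerivWithin n g s x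

namespace CMaux

open Filter Metric
open scoped Topology

noncomputable def J (n : ℕ) (w : ℝ) : ℝ :=
  ∫ t in Set.Ioi (0:ℝ), t ^ n / (1 + t ^ 2 + t * w) ^ (n + 1)

lemma den_pos {t w : ℝ} (ht : 0 ≤ t) (hw : 0 ≤ w) : 0 < 1 + t ^ 2 + t * w := by nlinarith

lemma frac_le (n : ℕ) {t w : ℝ} (ht : 0 ≤ t) (hw : 0 ≤ w) :
    t ^ n / (1 + t ^ 2 + t * w) ^ (n + 1) ≤ (1 + t ^ 2)⁻¹ := by
  have h1 : (0:ℝ) < 1 + t ^ 2 := by positivity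
  have h2 : t ^ n ≤ (1 + t ^ 2) ^ n := pow_le_pow_left₀ ht (by nlinarith) n
  have h3 : (1 + t ^ 2) ^ (n + 1) ≤ (1 + t ^ 2 + t * w) ^ (n + 1) :=
    pow_le_pow_left₀ h1.le (by nlinarith) _
  have key : t ^ n * (1 + t ^ 2) ≤ (1 + t ^ 2 + t * w) ^ (n + 1) := by
    calc t ^ n * (1 + t ^ 2) ≤ (1 + t ^ 2) ^ n * (1 + t ^ 2) :=
          mul_le_mul_of_nonneg_right h2 h1.le
      _ = (1 + t ^ 2) ^ (n + 1) := (pow_succ _ n).symm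
      _ ≤ _ := h3
  rw [div_le_iff₀ (pow_pos (den_pos ht hw) _), inv_mul_eq_div, le_div_iff₀ h1]
  exact key

lemma meas_aux (n : ℕ) (w : ℝ) :
    AEStronglyMeasurable (fun t : ℝ => t ^ n / (1 + t ^ 2 + t * w) ^ (n + 1))
      (volume.restrict (Set.Ioi (0:ℝ))) := by
  apply Measurable.aestronglyMeasurable
  exact (measurable_id.pow_const n).div
    (((measurable_const.add (measurable_id.pow_const 2)).add
      (measurable_id.mul_const w)).pow_const _)

lemma integrableJ (n : ℕ) {w : ℝ} (hw : 0 ≤ w) :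
    IntegrableOn (fun t => t ^ n / (1 + t ^ 2 + t * w) ^ (n + 1)) (Set.Ioi (0:ℝ)) := by
  refine Integrable.mono' (integrable_inv_one_add_sq.restrict) (meas_aux n w) ?_
  filter_upwards [ae_restrict_mem measurableSet_Ioi] with t ht
  rw [Real.norm_eq_abs, abs_of_nonneg
    (div_nonneg (pow_nonneg (le_of_lt ht) n) (pow_nonneg (den_pos (le_of_lt ht) hw).le _))]
  exact frac_le n (le_of_lt ht) hw

lemma hasDerivAt_integrand (n : ℕ) {t x : ℝ} (ht : 0 ≤ t) (hx : 0 ≤ x) :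
    HasDerivAt (fun w => t ^ n / (1 + t ^ 2 + t * w) ^ (n + 1))
      (-((n:ℝ) + 1) * (t ^ (n + 1) / (1 + t ^ 2 + t * x) ^ (n + 2))) x := by
  have hD : 0 < 1 + t ^ 2 + t * x := den_pos ht hx
  have h1 : HasDerivAt (fun w : ℝ => 1 + t ^ 2 + t * w) t x := by
    simpa using ((hasDerivAt_id x).const_mul t).const_add (1 + t ^ 2)
  have h2 : HasDerivAt (fun w : ℝ => (1 + t ^ 2 + t * w) ^ (n + 1))
      (((n:ℝ) + 1) * (1 + t ^ 2 + t * x) ^ n * t) x := by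
    simpa using h1.fun_pow (n + 1)
  have h3 := (hasDerivAt_const x (t ^ n)).fun_div h2 (pow_ne_zero _ hD.ne')
  convert h3 using 1
  · rfl
  · rfl
  have hDne : (1 + t ^ 2 + t * x) ≠ 0 := hD.ne'
  field_simp
  ring

lemma hasDerivAt_J (n : ℕ) {x : ℝ} (hx : 2 < x) :
    HasDerivAt (J n) (-((n:ℝ) + 1) * J (n + 1) x) x := by
  have hε : (0:ℝ) < x - 2 := by linarith
  have hball : ∀ w ∈ ball x (x - 2), (0:ℝ) ≤ w := by
    intro w hw
    rw [mem_ball, Real.dist_eq, abs_sub_lt_iff] at hw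
    linarith [hw.2]
  have key := hasDerivAt_integral_of_dominated_loc_of_deriv_le
    (μ := volume.restrict (Set.Ioi (0:ℝ)))
    (F := fun w t => t ^ n / (1 + t ^ 2 + t * w) ^ (n + 1))
    (F' := fun w t => -((n:ℝ) + 1) * (t ^ (n + 1) / (1 + t ^ 2 + t * w) ^ (n + 2)))
    (x₀ := x) (bound := fun t => ((n:ℝ) + 1) * (1 + t ^ 2)⁻¹)
    (ball_mem_nhds x hε)
    (Filter.Eventually.of_forall fun w => meas_aux n w)
    (integrableJ n (by linarith))
    ((meas_aux (n + 1) x).const_mul _)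
    ?_ ?_ ?_
  · have h2 : (∫ t in Set.Ioi (0:ℝ), -((n:ℝ) + 1) * (t ^ (n + 1) / (1 + t ^ 2 + t * x) ^ (n + 2)))
        = -((n:ℝ) + 1) * J (n + 1) x := by
      rw [integral_const_mul]; rfl
    rw [← h2]
    exact key.2
  · filter_upwards [ae_restrict_mem measurableSet_Ioi] with t ht
    intro w hw
    have hw0 := hball w hw
    rw [norm_mul, Real.norm_eq_abs, Real.norm_eq_abs, abs_of_nonneg
      (div_nonneg (pow_nonneg (le_of_lt ht) _) (pow_nonneg (den_pos (le_of_lt ht) hw0).le _))]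
    have : |-((n:ℝ) + 1)| = (n:ℝ) + 1 := by
      rw [abs_neg, abs_of_nonneg]; positivity
    rw [this]
    exact mul_le_mul_of_nonneg_left (frac_le (n + 1) (le_of_lt ht) hw0) (by positivity)
  · exact (integrable_inv_one_add_sq.restrict).const_mul _
  · filter_upwards [ae_restrict_mem measurableSet_Ioi] with t ht
    intro w hw
    exact hasDerivAt_integrand n (le_of_lt ht) (hball w hw)

lemma J_nonneg (n : ℕ) (w : ℝ) (hw : 0 ≤ w) : 0 ≤ J n w := by
  apply setIntegral_nonneg measurableSet_Ioi
  intro t ht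
  exact div_nonneg (pow_nonneg (le_of_lt ht) n) (pow_nonneg (den_pos (le_of_lt ht) hw).le _)

lemma iteratedDeriv_J0 (n : ℕ) : ∀ w ∈ Set.Ioi (2:ℝ),
    iteratedDeriv n (J 0) w = (-1:ℝ) ^ n * (Nat.factorial n : ℝ) * J n w := by
  induction n with
  | zero => intro w _; simp [iteratedDeriv_zero]
  | succ n ih =>
    intro w hw
    have hw2 : (2:ℝ) < w := hw
    have hmem : Set.Ioi (2:ℝ) ∈ 𝓝 w := isOpen_Ioi.mem_nhds hw
    have heq : iteratedDeriv n (J 0) =ᶠ[𝓝 w] fun x => (-1:ℝ) ^ n * (Nat.factorial n : ℝ) * J n x :=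
      Filter.eventuallyEq_of_mem hmem ih
    rw [iteratedDeriv_succ, heq.deriv_eq]
    have hd : HasDerivAt (fun x => (-1:ℝ) ^ n * (Nat.factorial n : ℝ) * J n x)
        ((-1:ℝ) ^ n * (Nat.factorial n : ℝ) * (-((n:ℝ) + 1) * J (n + 1) w)) w :=
      (hasDerivAt_J n hw2).const_mul _
    rw [hd.deriv, pow_succ, Nat.factorial_succ]
    push_cast
    ring

lemma iteratedDerivWithin_of_isOpen' {F : Type*} [NormedAddCommGroup F] [NormedSpace ℝ F]
    {f : ℝ → F} {s : Set ℝ} (n : ℕ) (hs : IsOpen s) {x : ℝ} (hx : x ∈ s) :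
    iteratedDerivWithin n f s x = iteratedDeriv n f x := by
  simp only [iteratedDerivWithin, iteratedDeriv]
  rw [iteratedFDerivWithin_of_isOpen n hs hx]

lemma integral_eq (v : ℝ) (hv : 1 < v) :
    (∫ t in Set.Ioi (0:ℝ), (1 + t ^ 2 + t * (v + v⁻¹))⁻¹) =
      2 * v * Real.log v / (v ^ 2 - 1) := by
  have hv0 : 0 < v := by linarith
  have hvi0 : 0 < v⁻¹ := by positivity
  have hvi1 : v⁻¹ < 1 := by
    rw [inv_lt_one_iff₀]; right; exact hv
  have hc : 0 < v - v⁻¹ := by linarith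
  have hw0 : (0:ℝ) ≤ v + v⁻¹ := by positivity
  set Φ : ℝ → ℝ := fun t => (Real.log (t + v⁻¹) - Real.log (t + v)) / (v - v⁻¹) with hΦdef
  have hderiv : ∀ t ∈ Set.Ici (0:ℝ), HasDerivAt Φ ((1 + t ^ 2 + t * (v + v⁻¹))⁻¹) t := by
    intro t ht
    have ht0 : (0:ℝ) ≤ t := ht
    have h1 : 0 < t + v⁻¹ := by linarith
    have h2 : 0 < t + v := by linarith
    have ha : HasDerivAt (fun t : ℝ => Real.log (t + v⁻¹)) (t + v⁻¹)⁻¹ t := by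
      simpa [Function.comp_def] using (Real.hasDerivAt_log h1.ne').comp t ((hasDerivAt_id t).add_const v⁻¹)
    have hb : HasDerivAt (fun t : ℝ => Real.log (t + v)) (t + v)⁻¹ t := by
      simpa [Function.comp_def] using (Real.hasDerivAt_log h2.ne').comp t ((hasDerivAt_id t).add_const v)
    have hΦ : HasDerivAt Φ (((t + v⁻¹)⁻¹ - (t + v)⁻¹) / (v - v⁻¹)) t := (ha.sub hb).div_const _
    convert hΦ using 1
    have hvv : v⁻¹ * v = 1 := inv_mul_cancel₀ hv0.ne'
    have hden : 1 + t ^ 2 + t * (v + v⁻¹) = (t + v⁻¹) * (t + v) := by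
      have hx : (t + v⁻¹) * (t + v) = t ^ 2 + t * (v + v⁻¹) + v⁻¹ * v := by ring
      rw [hx, hvv]; ring
    rw [hden, eq_div_iff hc.ne', inv_sub_inv h1.ne' h2.ne', inv_mul_eq_div]
    congr 1
    ring
  have hint : IntegrableOn (fun t => (1 + t ^ 2 + t * (v + v⁻¹))⁻¹) (Set.Ioi (0:ℝ)) := by
    have := integrableJ 0 hw0
    simpa using this
  have htend : Tendsto Φ atTop (𝓝 0) := by
    have h2 : Tendsto (fun t : ℝ => (t + v)⁻¹) atTop (𝓝 0) :=
      (tendsto_atTop_add_const_right _ v tendsto_id).inv_tendsto_atTop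
    have h1 : Tendsto (fun t : ℝ => (t + v⁻¹) / (t + v)) atTop (𝓝 1) := by
      have h3 : Tendsto (fun t : ℝ => 1 + (v⁻¹ - v) * (t + v)⁻¹) atTop (𝓝 (1 + (v⁻¹ - v) * 0)) :=
        tendsto_const_nhds.add (h2.const_mul _)
      rw [mul_zero, add_zero] at h3
      apply h3.congr'
      filter_upwards [eventually_gt_atTop 0] with t ht
      have h4 : t + v ≠ 0 := by positivity
      field_simp
      ring
    have h5 : Tendsto (fun t : ℝ => Real.log ((t + v⁻¹) / (t + v))) atTop (𝓝 0) := by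
      have := (Real.continuousAt_log (one_ne_zero)).tendsto.comp h1
      simpa [Function.comp_def] using this
    have h6 : Tendsto (fun t : ℝ => Real.log (t + v⁻¹) - Real.log (t + v)) atTop (𝓝 0) := by
      apply h5.congr'
      filter_upwards [eventually_gt_atTop 0] with t ht
      rw [Real.log_div (by positivity) (by positivity)]
    simpa using h6.div_const (v - v⁻¹)
  have key := integral_Ioi_of_hasDerivAt_of_tendsto' hderiv hint htend
  rw [key]
  have hΦ0 : Φ 0 = (-2) * Real.log v / (v - v⁻¹) := by
    simp only [hΦdef, zero_add, Real.log_inv]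
    ring
  rw [hΦ0]
  have hrw : v - v⁻¹ = (v ^ 2 - 1) / v := by
    field_simp
  rw [hrw, div_div_eq_mul_div]
  ring

noncomputable def G (w : ℝ) : ℝ :=
  2 * Real.log ((w + Real.sqrt (w ^ 2 - 4)) / 2) / Real.sqrt (w ^ 2 - 4)

lemma J0_eq {w : ℝ} (hw : 2 < w) : J 0 w = G w := by
  have h4 : 0 < w ^ 2 - 4 := by nlinarith
  set s := Real.sqrt (w ^ 2 - 4) with hs
  have hs2 : s ^ 2 = w ^ 2 - 4 := Real.sq_sqrt h4.le
  have hs0 : 0 < s := Real.sqrt_pos.2 h4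
  have hslt : s < w := by nlinarith
  set v := (w + s) / 2 with hvdef
  have hv1 : 1 < v := by rw [hvdef]; linarith
  have hv0 : 0 < v := by linarith
  have hvinv : v⁻¹ = (w - s) / 2 := by
    have hmul : v * ((w - s) / 2) = 1 := by
      rw [hvdef]
      have : (w + s) / 2 * ((w - s) / 2) = (w ^ 2 - s ^ 2) / 4 := by ring
      rw [this, hs2]; ring
    exact inv_eq_of_mul_eq_one_right hmul
  have hww : v + v⁻¹ = w := by rw [hvinv, hvdef]; ring
  have hvv : v - v⁻¹ = s := by rw [hvinv, hvdef]; ring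
  have h1 : J 0 w = 2 * v * Real.log v / (v ^ 2 - 1) := by
    rw [← hww]
    have := integral_eq v hv1
    rw [← this]
    simp [J]
  rw [h1]
  have hv2 : v ^ 2 - 1 = v * s := by
    have : v ^ 2 - 1 = v * (v - v⁻¹) := by
      field_simp
    rw [this, hvv]
  rw [hv2]
  unfold G
  rw [← hs, ← hvdef]
  have hvne : v ≠ 0 := hv0.ne'
  have hsne : s ≠ 0 := hs0.ne'
  field_simp

lemma contDiffOn_G : ContDiffOn ℝ (⊤ : ℕ∞) G (Set.Ioi (2:ℝ)) := by
  intro w hw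
  apply ContDiffAt.contDiffWithinAt
  have hw2 : (2:ℝ) < w := hw
  have h4 : 0 < w ^ 2 - 4 := by nlinarith
  have hs0 : 0 < Real.sqrt (w ^ 2 - 4) := Real.sqrt_pos.2 h4
  have hpoly : ContDiffAt ℝ (⊤ : ℕ∞) (fun w : ℝ => w ^ 2 - 4) w :=
    ((contDiff_id.pow 2).sub contDiff_const).contDiffAt
  have hsqrt : ContDiffAt ℝ (⊤ : ℕ∞) (fun w : ℝ => Real.sqrt (w ^ 2 - 4)) w :=
    (Real.contDiffAt_sqrt h4.ne').comp w hpoly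
  have harg : ContDiffAt ℝ (⊤ : ℕ∞) (fun w : ℝ => (w + Real.sqrt (w ^ 2 - 4)) / 2) w :=
    (contDiffAt_id.add hsqrt).div_const 2
  have hargpos : 0 < (w + Real.sqrt (w ^ 2 - 4)) / 2 := by linarith [hs0]
  have hln : ContDiffAt ℝ (⊤ : ℕ∞) (fun w : ℝ => Real.log ((w + Real.sqrt (w ^ 2 - 4)) / 2)) w :=
    harg.log hargpos.ne'
  exact (contDiffAt_const.mul hln).div hsqrt hs0.ne'

end CMaux

/-- For v > 1, ∫₀^∞ (1 + t² + t(v + v⁻¹))⁻¹ dt = 2v log v/(v² − 1);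
this is the derivative of (log v)² with respect to w = v + v⁻¹, and the function
w ↦ ∫₀^∞ (1 + t² + tw)⁻¹ dt is completely monotone on (2,∞). -/
theorem integral_formula_and_CM :
    (∀ v : ℝ, 1 < v →
      (∫ t in Set.Ioi (0 : ℝ), (1 + t ^ 2 + t * (v + v⁻¹))⁻¹) =
        2 * v * Real.log v / (v ^ 2 - 1)) ∧
    CompletelyMonotoneOn (fun w => ∫ t in Set.Ioi (0 : ℝ), (1 + t ^ 2 + t * w)⁻¹)
      (Set.Ioi 2) := by
  have hFJ : (fun w => ∫ t in Set.Ioi (0:ℝ), (1 + t ^ 2 + t * w)⁻¹) = CMaux.J 0 := by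
    funext w; simp [CMaux.J]
  refine ⟨fun v hv => CMaux.integral_eq v hv, ?_, ?_⟩
  · rw [hFJ]
    exact CMaux.contDiffOn_G.congr (fun w hw => CMaux.J0_eq hw)
  · intro n w hw
    rw [hFJ, CMaux.iteratedDerivWithin_of_isOpen' n isOpen_Ioi hw,
      CMaux.iteratedDeriv_J0 n w hw]
    have hw2 : (2:ℝ) < w := hw
    have hw0 : (0:ℝ) ≤ w := by linarith
    have hJ := CMaux.J_nonneg n w hw0
    have hkey : (-1:ℝ) ^ n * ((-1:ℝ) ^ n * (Nat.factorial n : ℝ) * CMaux.J n w)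
        = (Nat.factorial n : ℝ) * CMaux.J n w := by
      rw [← mul_assoc, ← mul_assoc, ← mul_pow]
      norm_num
    rw [hkey]
    exact mul_nonneg (Nat.cast_nonneg _) hJ
end
end

section
/- Let k ≥ 1 be an integer, let X be a positive random variable whose distribution has a density that is HM_k, and let q be a real number with |q| ≥ 1. Then the distribution of X^q has a density that is HM_k. -/
open MeasureTheory ProbabilityTheory Real Set
open scoped ENNReal NNReal

noncomputable section

/-- Alternating-monotone class: `AltM m f s` means `f ≥ 0`, and derivatives alternate in sign
up to order `m`, with the `m`-th sign-adjusted derivative antitone.  (Corresponds to the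
`h`-conditions in `IsHMk (m+1)`.) -/
def AltM : ℕ → (ℝ → ℝ) → Set ℝ → Prop
  | 0, f, s => (∀ x ∈ s, 0 ≤ f x) ∧ AntitoneOn f s
  | (m+1), f, s => (∀ x ∈ s, 0 ≤ f x) ∧ DifferentiableOn ℝ f s ∧
      AltM m (fun x => -derivWithin f s x) s

theorem altM_nonneg {m : ℕ} {f : ℝ → ℝ} {s : Set ℝ} (h : AltM m f s) : ∀ x ∈ s, 0 ≤ f x := by
  cases m with
  | zero => exact h.1
  | succ m => exact h.1

theorem altM_congr {m : ℕ} {f g : ℝ → ℝ} {s : Set ℝ} (hfg : EqOn f g s) :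
    AltM m f s → AltM m g s := by
  induction m generalizing f g with
  | zero =>
    rintro ⟨h0, h1⟩
    exact ⟨fun x hx => (hfg hx) ▸ h0 x hx, fun x hx y hy hxy => by
      rw [← hfg hx, ← hfg hy]; exact h1 hx hy hxy⟩
  | succ m IH =>
    rintro ⟨h0, h1, h2⟩
    refine ⟨fun x hx => (hfg hx) ▸ h0 x hx,
      fun x hx => (h1 x hx).congr (fun y hy => (hfg hy).symm) (hfg hx).symm, ?_⟩
    refine IH (fun x hx => ?_) h2
    simp only [neg_inj]
    exact derivWithin_congr hfg (hfg hx)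

theorem altM_antitone {m : ℕ} {f : ℝ → ℝ} {s : Set ℝ} (hso : IsOpen s) (hsc : Convex ℝ s)
    (h : AltM m f s) : AntitoneOn f s := by
  cases m with
  | zero => exact h.2
  | succ m =>
    obtain ⟨h0, h1, h2⟩ := h
    have hder : ∀ x ∈ s, deriv f x ≤ 0 := by
      intro x hx
      have := altM_nonneg h2 x hx
      have e : derivWithin f s x = deriv f x := derivWithin_of_isOpen hso hx
      linarith [e ▸ this]
    have hint : interior s = s := hso.interior_eq
    refine antitoneOn_of_deriv_nonpos hsc h1.continuousOn ?_ ?_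
    · rw [hint]; exact fun x hx =>
        ((h1 x hx).differentiableAt (hso.mem_nhds hx)).differentiableWithinAt
    · rw [hint]; exact hder

theorem altM_down {m : ℕ} {f : ℝ → ℝ} {s : Set ℝ} (hso : IsOpen s) (hsc : Convex ℝ s)
    (h : AltM (m+1) f s) : AltM m f s := by
  induction m generalizing f with
  | zero => exact ⟨h.1, altM_antitone hso hsc h⟩
  | succ m IH => exact ⟨h.1, h.2.1, IH h.2.2⟩

theorem altM_add {m : ℕ} {f g : ℝ → ℝ} {s : Set ℝ} (hso : IsOpen s)
    (hf : AltM m f s) (hg : AltM m g s) : AltM m (fun x => f x + g x) s := by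
  induction m generalizing f g with
  | zero =>
    exact ⟨fun x hx => add_nonneg (hf.1 x hx) (hg.1 x hx),
      fun x hx y hy hxy => add_le_add (hf.2 hx hy hxy) (hg.2 hx hy hxy)⟩
  | succ m IH =>
    refine ⟨fun x hx => add_nonneg (hf.1 x hx) (hg.1 x hx),
      fun x hx => (hf.2.1 x hx).add (hg.2.1 x hx), ?_⟩
    refine altM_congr (fun x hx => ?_) (IH hf.2.2 hg.2.2)
    have : derivWithin (fun y => f y + g y) s x
        = derivWithin f s x + derivWithin g s x :=
      derivWithin_add (hf.2.1 x hx) (hg.2.1 x hx)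
    rw [this]; ring

theorem altM_const_mul {m : ℕ} {f : ℝ → ℝ} {s : Set ℝ} {c : ℝ} (hso : IsOpen s) (hc : 0 ≤ c)
    (hf : AltM m f s) : AltM m (fun x => c * f x) s := by
  induction m generalizing f with
  | zero =>
    exact ⟨fun x hx => mul_nonneg hc (hf.1 x hx),
      fun x hx y hy hxy => mul_le_mul_of_nonneg_left (hf.2 hx hy hxy) hc⟩
  | succ m IH =>
    refine ⟨fun x hx => mul_nonneg hc (hf.1 x hx),
      fun x hx => (hf.2.1 x hx).const_mul c, ?_⟩
    refine altM_congr (fun x hx => ?_) (IH hf.2.2)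
    have : derivWithin (fun y => c * f y) s x = c * derivWithin f s x :=
      derivWithin_const_mul c (hf.2.1 x hx)
    rw [this]; ring

theorem altM_mul {m : ℕ} {f g : ℝ → ℝ} {s : Set ℝ} (hso : IsOpen s) (hsc : Convex ℝ s)
    (hf : AltM m f s) (hg : AltM m g s) : AltM m (fun x => f x * g x) s := by
  induction m generalizing f g with
  | zero =>
    exact ⟨fun x hx => mul_nonneg (hf.1 x hx) (hg.1 x hx),
      fun x hx y hy hxy => mul_le_mul (hf.2 hx hy hxy) (hg.2 hx hy hxy)
        (hg.1 y hy) (hf.1 x hx)⟩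
  | succ m IH =>
    refine ⟨fun x hx => mul_nonneg (hf.1 x hx) (hg.1 x hx),
      fun x hx => (hf.2.1 x hx).mul (hg.2.1 x hx), ?_⟩
    have h1 : AltM m (fun x => (-derivWithin f s x) * g x) s :=
      IH hf.2.2 (altM_down hso hsc hg)
    have h2 : AltM m (fun x => f x * (-derivWithin g s x)) s := by
      have := IH (altM_down hso hsc hf) hg.2.2
      exact altM_congr (fun x hx => by ring) this
    refine altM_congr (fun x hx => ?_) (altM_add hso h1 h2)
    have : derivWithin (fun y => f y * g y) s x
        = derivWithin f s x * g x + f x * derivWithin g s x :=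
      derivWithin_mul (hf.2.1 x hx) (hg.2.1 x hx)
    rw [this]; ring

theorem altM_comp {m : ℕ} {f g : ℝ → ℝ} {s t : Set ℝ}
    (hso : IsOpen s) (hsc : Convex ℝ s) (hto : IsOpen t) (htc : Convex ℝ t)
    (hf : AltM m f s) (hg : DifferentiableOn ℝ g t) (hmaps : MapsTo g t s)
    (hg' : AltM m (fun x => derivWithin g t x) t) :
    AltM m (fun x => f (g x)) t := by
  have hgmono : MonotoneOn g t := by
    refine monotoneOn_of_deriv_nonneg htc hg.continuousOn ?_ ?_
    · rw [hto.interior_eq]; exact fun x hx =>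
        ((hg x hx).differentiableAt (hto.mem_nhds hx)).differentiableWithinAt
    · rw [hto.interior_eq]; intro x hx
      have := altM_nonneg hg' x hx
      rwa [derivWithin_of_isOpen hto hx] at this
  induction m generalizing f with
  | zero =>
    exact ⟨fun x hx => hf.1 _ (hmaps hx),
      fun x hx y hy hxy => hf.2 (hmaps hx) (hmaps hy) (hgmono hx hy hxy)⟩
  | succ m IH =>
    refine ⟨fun x hx => hf.1 _ (hmaps hx), ?_, ?_⟩
    · intro x hx
      exact ((hf.2.1 _ (hmaps hx)).comp x (hg x hx) hmaps)
    · have hcomp : AltM m (fun x => (fun y => -derivWithin f s y) (g x)) t :=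
        IH hf.2.2 (altM_down hto htc hg')
      have := altM_mul hto htc hcomp (altM_down hto htc hg')
      refine altM_congr (fun x hx => ?_) this
      have hd : derivWithin (fun y => f (g y)) t x
          = derivWithin f s (g x) * derivWithin g t x := by
        exact derivWithin_comp x (hf.2.1 _ (hmaps hx)) (hg x hx) hmaps
      rw [hd]; ring






/-- The `h`-conditions appearing in `IsHMk k`. -/
def HMc (k : ℕ) (h : ℝ → ℝ) : Prop :=
  (∀ j : ℕ, j + 1 < k → ∀ w ∈ Set.Ioi (2 : ℝ),
    DifferentiableWithinAt ℝ (iteratedDerivWithin j h (Set.Ioi 2)) (Set.Ioi 2) w) ∧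
  (∀ j : ℕ, j < k → ∀ w ∈ Set.Ioi (2 : ℝ),
    0 ≤ (-1 : ℝ) ^ j * iteratedDerivWithin j h (Set.Ioi 2) w) ∧
  AntitoneOn (fun w => (-1 : ℝ) ^ (k - 1) * iteratedDerivWithin (k - 1) h (Set.Ioi 2) w)
    (Set.Ioi 2)

theorem uIoi2 : UniqueDiffOn ℝ (Set.Ioi (2:ℝ)) := (isOpen_Ioi).uniqueDiffOn

theorem iter_shift (h : ℝ → ℝ) (j : ℕ) {x : ℝ} (hx : x ∈ Set.Ioi (2:ℝ)) :
    iteratedDerivWithin j (fun w => -derivWithin h (Set.Ioi 2) w) (Set.Ioi 2) x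
      = -iteratedDerivWithin (j+1) h (Set.Ioi 2) x := by
  rw [iteratedDerivWithin_fun_neg, iteratedDerivWithin_succ']

theorem antitoneOn_congr {f g : ℝ → ℝ} {s : Set ℝ} (hfg : ∀ x ∈ s, f x = g x)
    (h : AntitoneOn f s) : AntitoneOn g s := fun x hx y hy hxy => by
  rw [← hfg x hx, ← hfg y hy]; exact h hx hy hxy

theorem altM_iff_HMc (m : ℕ) (h : ℝ → ℝ) :
    AltM m h (Set.Ioi 2) ↔ HMc (m+1) h := by
  induction m generalizing h with
  | zero =>
    constructor
    · rintro ⟨h0, h1⟩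
      refine ⟨fun j hj => by omega, ?_, ?_⟩
      · intro j hj w hw
        interval_cases j
        simpa [iteratedDerivWithin_zero] using h0 w hw
      · simp only [Nat.sub_self, pow_zero, iteratedDerivWithin_zero, one_mul]
        exact h1
    · rintro ⟨_, h1, h2⟩
      refine ⟨fun w hw => by simpa [iteratedDerivWithin_zero] using h1 0 (by omega) w hw, ?_⟩
      simpa [iteratedDerivWithin_zero] using h2
  | succ m IH =>
    constructor
    · rintro ⟨h0, hdiff, halt⟩
      obtain ⟨c1, c2, c3⟩ := (IH _).mp halt
      refine ⟨?_, ?_, ?_⟩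
      · intro j hj w hw
        cases j with
        | zero => simpa [iteratedDerivWithin_zero] using hdiff w hw
        | succ i =>
          have hd := (c1 i (by omega) w hw).neg
          refine hd.congr (fun y hy => ?_) ?_
          · rw [Pi.neg_apply, iter_shift h i hy]; ring
          · rw [Pi.neg_apply, iter_shift h i hw]; ring
      · intro j hj w hw
        cases j with
        | zero => simpa [iteratedDerivWithin_zero] using h0 w hw
        | succ i =>
          have := c2 i (by omega) w hw
          rw [iter_shift h i hw] at this
          calc (0:ℝ) ≤ (-1)^i * -iteratedDerivWithin (i+1) h (Set.Ioi 2) w := this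
          _ = (-1)^(i+1) * iteratedDerivWithin (i+1) h (Set.Ioi 2) w := by ring
      · refine antitoneOn_congr (fun x hx => ?_) c3
        simp only [Nat.add_sub_cancel]
        rw [iter_shift h m hx]
        ring
    · rintro ⟨c1, c2, c3⟩
      have hdiff : DifferentiableOn ℝ h (Set.Ioi 2) := by
        intro w hw
        simpa [iteratedDerivWithin_zero] using c1 0 (by omega) w hw
      refine ⟨fun w hw => by simpa [iteratedDerivWithin_zero] using c2 0 (by omega) w hw,
        hdiff, (IH _).mpr ⟨?_, ?_, ?_⟩⟩
      · intro j hj w hw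
        have hd := (c1 (j+1) (by omega) w hw).neg
        refine hd.congr (fun y hy => ?_) ?_
        · rw [iter_shift h j hy]; rfl
        · rw [iter_shift h j hw]; rfl
      · intro j hj w hw
        have := c2 (j+1) (by omega) w hw
        rw [iter_shift h j hw]
        calc (0:ℝ) ≤ (-1)^(j+1) * iteratedDerivWithin (j+1) h (Set.Ioi 2) w := this
        _ = (-1)^j * -iteratedDerivWithin (j+1) h (Set.Ioi 2) w := by ring
      · refine antitoneOn_congr (fun x hx => ?_) c3
        simp only [Nat.add_sub_cancel]
        rw [iter_shift h m hx]
        ring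





section kernel
variable {α : ℝ}

/-- The parametric integral `G_j(w) = ∫_0^∞ s^(α-1)/(w+s+s⁻¹)^j ds`. -/
def Gj (α : ℝ) (j : ℕ) (w : ℝ) : ℝ := ∫ s in Ioi (0:ℝ), s^(α-1) / (w + s + s⁻¹)^j

theorem denom_pos {w s : ℝ} (hw : 2 ≤ w) (hs : 0 < s) : 0 < w + s + s⁻¹ := by
  have := inv_pos.mpr hs
  linarith

theorem kernel_contOn {w : ℝ} (j : ℕ) (hw : 2 ≤ w) :
    ContinuousOn (fun s : ℝ => s^(α-1) / (w + s + s⁻¹)^j) (Ioi 0) := by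
  apply ContinuousOn.div
  · exact fun s hs =>
      (Real.continuousAt_rpow_const s (α-1) (Or.inl (ne_of_gt hs))).continuousWithinAt
  · exact (((continuousOn_const.add continuousOn_id).add
      (continuousOn_id.inv₀ (fun s hs => ne_of_gt hs))).pow j)
  · exact fun s hs => pow_ne_zero _ (ne_of_gt (denom_pos hw hs))

theorem kernel_integrable (hα : 0 < α) (hα1 : α < 1) {w : ℝ} {j : ℕ} (hj : 1 ≤ j) (hw : 2 ≤ w) :
    IntegrableOn (fun s : ℝ => s^(α-1) / (w + s + s⁻¹)^j) (Ioi 0) := by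
  have hmeas : AEStronglyMeasurable (fun s : ℝ => s^(α-1) / (w + s + s⁻¹)^j)
      (volume.restrict (Ioi (0:ℝ))) :=
    (kernel_contOn j hw).aestronglyMeasurable measurableSet_Ioi
  have h01 : IntegrableOn (fun s : ℝ => s^(α-1) / (w + s + s⁻¹)^j) (Ioc 0 1) := by
    have hb : IntegrableOn (fun s : ℝ => s^(α-1)) (Ioc (0:ℝ) 1) := by
      have := intervalIntegral.intervalIntegrable_rpow' (a := 0) (b := 1)
        (show (-1:ℝ) < α - 1 by linarith)
      rwa [intervalIntegrable_iff_integrableOn_Ioc_of_le (by norm_num)] at this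
    refine Integrable.mono' hb (hmeas.mono_set Ioc_subset_Ioi_self) ?_
    filter_upwards [ae_restrict_mem measurableSet_Ioc] with s hs
    have hs0 : 0 < s := hs.1
    have h1 : (1:ℝ) ≤ (w + s + s⁻¹)^j := by
      refine one_le_pow₀ ?_
      have := inv_pos.mpr hs0
      linarith
    rw [Real.norm_eq_abs, abs_of_nonneg (div_nonneg (rpow_nonneg hs0.le _) (by positivity))]
    exact div_le_self (rpow_nonneg hs0.le _) h1
  have h1i : IntegrableOn (fun s : ℝ => s^(α-1) / (w + s + s⁻¹)^j) (Ioi 1) := by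
    have hb : IntegrableOn (fun s : ℝ => s^(α-1-j)) (Ioi (1:ℝ)) :=
      integrableOn_Ioi_rpow_of_lt (by
        have : (1:ℝ) ≤ (j:ℝ) := by exact_mod_cast hj
        linarith) one_pos
    refine Integrable.mono' hb (hmeas.mono_set (Ioi_subset_Ioi (by norm_num))) ?_
    filter_upwards [ae_restrict_mem measurableSet_Ioi] with s hs
    have hs1 : (1:ℝ) < s := hs
    have hs0 : 0 < s := lt_trans one_pos hs1
    rw [Real.norm_eq_abs, abs_of_nonneg (div_nonneg (rpow_nonneg hs0.le _) (by positivity))]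
    have hle : s^(j:ℕ) ≤ (w + s + s⁻¹)^j := by
      refine pow_le_pow_left₀ hs0.le ?_ j
      have := inv_pos.mpr hs0
      linarith
    calc s^(α-1) / (w + s + s⁻¹)^j ≤ s^(α-1) / s^(j:ℕ) :=
          div_le_div_of_nonneg_left (rpow_nonneg hs0.le _) (by positivity) hle
    _ = s^(α-1-j) := by
          rw [← Real.rpow_natCast s j, ← Real.rpow_sub hs0]
  have := h01.union h1i
  rwa [Set.Ioc_union_Ioi_eq_Ioi (le_of_lt one_pos)] at this

theorem kernel_hasDeriv {s : ℝ} (hs : 0 < s) {x : ℝ} (hx : 2 < x) {j : ℕ} (hj : 1 ≤ j) :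
    HasDerivAt (fun y : ℝ => s^(α-1) / (y + s + s⁻¹)^j)
      (-(j:ℝ) * (s^(α-1) / (x + s + s⁻¹)^(j+1))) x := by
  have hD : 0 < x + s + s⁻¹ := denom_pos hx.le hs
  have h1 : HasDerivAt (fun y : ℝ => y + s + s⁻¹) 1 x := by
    have := (hasDerivAt_id x).add_const (s + s⁻¹)
    simpa [← add_assoc] using this
  have hpow : HasDerivAt (fun y : ℝ => (y + s + s⁻¹)^j)
      ((j:ℝ) * (x + s + s⁻¹)^(j-1) * 1) x := h1.pow j
  have hinv : HasDerivAt (fun y : ℝ => ((y + s + s⁻¹)^j)⁻¹)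
      (-((j:ℝ) * (x + s + s⁻¹)^(j-1) * 1) / ((x + s + s⁻¹)^j)^2) x :=
    hpow.inv (pow_ne_zero _ (ne_of_gt hD))
  have key := hinv.const_mul (s^(α-1))
  have hfeq : (fun y : ℝ => s^(α-1) / (y + s + s⁻¹)^j)
      = (fun y : ℝ => s^(α-1) * ((y + s + s⁻¹)^j)⁻¹) := funext fun y => div_eq_mul_inv _ _
  rw [hfeq]
  refine key.congr_deriv (Eq.symm ?_)
  have hpowid : (x + s + s⁻¹)^(j-1) * (x + s + s⁻¹)^(j+1) = ((x + s + s⁻¹)^j)^2 := by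
    rw [← pow_add, ← pow_mul]
    congr 1
    omega
  have hne : (x + s + s⁻¹) ≠ 0 := ne_of_gt hD
  have h1ne : (x + s + s⁻¹)^(j-1) ≠ 0 := pow_ne_zero _ hne
  have h2ne : (x + s + s⁻¹)^(j+1) ≠ 0 := pow_ne_zero _ hne
  rw [← hpowid]
  field_simp

end kernel

open Metric in
theorem Gj_hasDeriv {α : ℝ} (hα : 0 < α) (hα1 : α < 1) {j : ℕ} (hj : 1 ≤ j) {w : ℝ}
    (hw : 2 < w) : HasDerivAt (Gj α j) (-(j:ℝ) * Gj α (j+1) w) w := by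
  have hε : 0 < (w - 2)/2 := by linarith
  have hball : ∀ x ∈ ball w ((w-2)/2), 2 < x := by
    intro x hx
    rw [mem_ball, Real.dist_eq, abs_lt] at hx
    linarith [hx.1]
  have key := hasDerivAt_integral_of_dominated_loc_of_deriv_le (μ := volume.restrict (Ioi 0))
    (F := fun x s => s^(α-1) / (x + s + s⁻¹)^j)
    (F' := fun x s => -(j:ℝ) * (s^(α-1) / (x + s + s⁻¹)^(j+1)))
    (x₀ := w)
    (bound := fun s => (j:ℝ) * (s^(α-1) / (2 + s + s⁻¹)^(j+1)))
    (ball_mem_nhds w hε) ?_ ?_ ?_ ?_ ?_ ?_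
  · have : ∫ s in Ioi (0:ℝ), -(j:ℝ) * (s^(α-1) / (w + s + s⁻¹)^(j+1))
        = -(j:ℝ) * Gj α (j+1) w := integral_const_mul _ _
    rw [this] at key
    exact key.2
  · filter_upwards [ball_mem_nhds w hε] with x hx
    exact (kernel_contOn j (hball x hx).le).aestronglyMeasurable measurableSet_Ioi
  · exact kernel_integrable hα hα1 hj hw.le
  · exact ((kernel_contOn (j+1) hw.le).aestronglyMeasurable measurableSet_Ioi).const_mul _
  · filter_upwards [ae_restrict_mem measurableSet_Ioi] with s hs
    intro x hx
    have hs0 : (0:ℝ) < s := hs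
    have hx2 : 2 < x := hball x hx
    have hd2 : 0 < 2 + s + s⁻¹ := denom_pos le_rfl hs0
    have hdx : 0 < x + s + s⁻¹ := denom_pos hx2.le hs0
    rw [Real.norm_eq_abs, abs_mul, abs_of_nonpos (by simp : -(j:ℝ) ≤ 0),
      abs_of_nonneg (div_nonneg (rpow_nonneg hs0.le _) (by positivity))]
    simp only [neg_neg]
    refine mul_le_mul_of_nonneg_left ?_ (by positivity)
    refine div_le_div_of_nonneg_left (rpow_nonneg hs0.le _) (by positivity) ?_
    exact pow_le_pow_left₀ hd2.le (by linarith) _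
  · exact (kernel_integrable hα hα1 (by omega) le_rfl).const_mul _
  · filter_upwards [ae_restrict_mem measurableSet_Ioi] with s hs
    intro x hx
    exact kernel_hasDeriv hs (hball x hx) hj

theorem Gj_nonneg {α : ℝ} (j : ℕ) {w : ℝ} (hw : 2 ≤ w) : 0 ≤ Gj α j w := by
  refine setIntegral_nonneg measurableSet_Ioi fun s hs => ?_
  have hs0 : (0:ℝ) < s := hs
  have := denom_pos hw hs0
  positivity

/-- `AltM` for all `G_j`, all orders. -/
theorem Gj_altM {α : ℝ} (hα : 0 < α) (hα1 : α < 1) (m : ℕ) {j : ℕ} (hj : 1 ≤ j) :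
    AltM m (Gj α j) (Set.Ioi 2) := by
  induction m generalizing j with
  | zero =>
    refine ⟨fun x hx => Gj_nonneg j (le_of_lt hx), ?_⟩
    refine antitoneOn_of_deriv_nonpos (convex_Ioi 2) ?_ ?_ ?_
    · intro x hx
      exact (Gj_hasDeriv hα hα1 hj hx).continuousAt.continuousWithinAt
    · rw [isOpen_Ioi.interior_eq]
      exact fun x hx => (Gj_hasDeriv hα hα1 hj hx).differentiableAt.differentiableWithinAt
    · rw [isOpen_Ioi.interior_eq]
      intro x hx
      rw [(Gj_hasDeriv hα hα1 hj hx).deriv]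
      have := Gj_nonneg (α := α) (j+1) (le_of_lt hx)
      have hjp : (0:ℝ) ≤ (j:ℝ) := Nat.cast_nonneg j
      nlinarith
  | succ m IH =>
    refine ⟨fun x hx => Gj_nonneg j (le_of_lt hx), ?_, ?_⟩
    · exact fun x hx => (Gj_hasDeriv hα hα1 hj hx).differentiableAt.differentiableWithinAt
    · refine altM_congr (fun x hx => ?_) (altM_const_mul (c := (j:ℝ)) isOpen_Ioi
        (Nat.cast_nonneg j) (IH (j := j+1) (by omega)))
      have : derivWithin (Gj α j) (Set.Ioi 2) x = -(j:ℝ) * Gj α (j+1) x := by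
        rw [derivWithin_of_isOpen isOpen_Ioi hx, (Gj_hasDeriv hα hα1 hj hx).deriv]
      rw [this]; ring

/-- `I_α = ∫_0^∞ s^(α-1)/(1+s) ds`. -/
def Ia (α : ℝ) : ℝ := ∫ s in Ioi (0:ℝ), s^(α-1) / (1+s)

theorem frac_contOn {α : ℝ} {c : ℝ} (hc : 0 < c) :
    ContinuousOn (fun s : ℝ => s^(α-1) / (s + c)) (Ioi 0) := by
  apply ContinuousOn.div
  · exact fun s hs =>
      (Real.continuousAt_rpow_const s (α-1) (Or.inl (ne_of_gt hs))).continuousWithinAt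
  · exact continuousOn_id.add continuousOn_const
  · intro s hs
    have : (0:ℝ) < s := hs
    positivity

theorem frac_integrable {α : ℝ} (hα : 0 < α) (hα1 : α < 1) {c : ℝ} (hc : 0 < c) :
    IntegrableOn (fun s : ℝ => s^(α-1) / (s + c)) (Ioi 0) := by
  have hmeas : AEStronglyMeasurable (fun s : ℝ => s^(α-1) / (s + c))
      (volume.restrict (Ioi (0:ℝ))) :=
    (frac_contOn hc).aestronglyMeasurable measurableSet_Ioi
  have h01 : IntegrableOn (fun s : ℝ => s^(α-1) / (s + c)) (Ioc 0 1) := by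
    have hb : IntegrableOn (fun s : ℝ => c⁻¹ * s^(α-1)) (Ioc (0:ℝ) 1) := by
      have := intervalIntegral.intervalIntegrable_rpow' (a := 0) (b := 1)
        (show (-1:ℝ) < α - 1 by linarith)
      rw [intervalIntegrable_iff_integrableOn_Ioc_of_le (by norm_num)] at this
      exact this.const_mul _
    refine Integrable.mono' hb (hmeas.mono_set Ioc_subset_Ioi_self) ?_
    filter_upwards [ae_restrict_mem measurableSet_Ioc] with s hs
    have hs0 : 0 < s := hs.1
    rw [Real.norm_eq_abs, abs_of_nonneg (div_nonneg (rpow_nonneg hs0.le _) (by positivity))]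
    rw [div_le_iff₀ (by positivity)]
    have : c ≤ s + c := by linarith
    calc s^(α-1) ≤ c⁻¹ * s^(α-1) * c := by
          rw [mul_comm _ c, ← mul_assoc, mul_inv_cancel₀ (ne_of_gt hc), one_mul]
    _ ≤ c⁻¹ * s^(α-1) * (s + c) := by
          refine mul_le_mul_of_nonneg_left this (by positivity)
  have h1i : IntegrableOn (fun s : ℝ => s^(α-1) / (s + c)) (Ioi 1) := by
    have hb : IntegrableOn (fun s : ℝ => s^(α-2)) (Ioi (1:ℝ)) :=
      integrableOn_Ioi_rpow_of_lt (by linarith) one_pos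
    refine Integrable.mono' hb (hmeas.mono_set (Ioi_subset_Ioi (by norm_num))) ?_
    filter_upwards [ae_restrict_mem measurableSet_Ioi] with s hs
    have hs1 : (1:ℝ) < s := hs
    have hs0 : 0 < s := lt_trans one_pos hs1
    rw [Real.norm_eq_abs, abs_of_nonneg (div_nonneg (rpow_nonneg hs0.le _) (by positivity))]
    calc s^(α-1) / (s + c) ≤ s^(α-1) / s :=
          div_le_div_of_nonneg_left (rpow_nonneg hs0.le _) hs0 (by linarith)
    _ = s^(α-2) := by
          rw [eq_comm, show α-2 = α-1-1 by ring, Real.rpow_sub hs0, Real.rpow_one]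
  have := h01.union h1i
  rwa [Set.Ioc_union_Ioi_eq_Ioi (le_of_lt one_pos)] at this

theorem Ia_pos {α : ℝ} (hα : 0 < α) (hα1 : α < 1) : 0 < Ia α := by
  have hInt : IntegrableOn (fun s : ℝ => s^(α-1) / (1 + s)) (Ioi 0) := by
    have := frac_integrable hα hα1 one_pos
    refine this.congr_fun (fun s hs => by rw [add_comm]) measurableSet_Ioi
  rw [Ia, setIntegral_pos_iff_support_of_nonneg_ae ?_ hInt]
  · refine lt_of_lt_of_le ?_ (measure_mono (show Ioo (0:ℝ) 1 ⊆ _ from ?_))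
    · simp [Real.volume_Ioo]
    · intro x hx
      refine ⟨?_, hx.1⟩
      simp only [Function.mem_support]
      have : (0:ℝ) < x := hx.1
      positivity
  · filter_upwards [ae_restrict_mem measurableSet_Ioi] with s hs
    have : (0:ℝ) < s := hs
    positivity

theorem frac_eval {α : ℝ} (hα : 0 < α) (hα1 : α < 1) {c : ℝ} (hc : 0 < c) :
    ∫ s in Ioi (0:ℝ), s^(α-1) / (s + c) = c^(α-1) * Ia α := by
  have key := integral_comp_mul_left_Ioi (fun s : ℝ => s^(α-1) / (s + c)) 0 hc
  rw [mul_zero] at key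
  have hL : ∫ x in Ioi (0:ℝ), (c*x)^(α-1) / (c*x + c)
      = (c^(α-1) / c) * Ia α := by
    rw [Ia, ← integral_const_mul]
    refine setIntegral_congr_fun measurableSet_Ioi (fun x hx => ?_)
    have hx0 : (0:ℝ) < x := hx
    rw [Real.mul_rpow hc.le hx0.le]
    have h1x : (0:ℝ) < 1 + x := by linarith
    field_simp
    ring
  rw [hL] at key
  have hc' : c ≠ 0 := ne_of_gt hc
  simp only [smul_eq_mul] at key
  have h2 : c * (c⁻¹ * ∫ x in Ioi (0:ℝ), x^(α-1)/(x+c))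
      = ∫ x in Ioi (0:ℝ), x^(α-1)/(x+c) := by
    rw [← mul_assoc, mul_inv_cancel₀ hc', one_mul]
  have h3 : c * (c^(α-1)/c * Ia α) = c^(α-1) * Ia α := by field_simp
  have h4 := congrArg (fun t => c * t) key
  rw [h3, h2] at h4
  exact h4.symm

theorem G1_eval {α : ℝ} (hα : 0 < α) (hα1 : α < 1) {ρ : ℝ} (hρ : 1 < ρ) :
    Gj α 1 (ρ + ρ⁻¹) = Ia α * ((ρ^α - ρ^(-α)) / (ρ - ρ⁻¹)) := by
  have hρ0 : 0 < ρ := lt_trans one_pos hρ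
  have hρi0 : 0 < ρ⁻¹ := inv_pos.mpr hρ0
  have hρi1 : ρ⁻¹ < 1 := by
    rw [inv_lt_one_iff₀]; right; exact hρ
  have hS : 0 < ρ - ρ⁻¹ := by linarith
  have hpt : ∀ s ∈ Ioi (0:ℝ), s^(α-1) / ((ρ + ρ⁻¹) + s + s⁻¹)^1
      = (ρ/(ρ-ρ⁻¹)) * (s^(α-1)/(s+ρ)) - (ρ⁻¹/(ρ-ρ⁻¹)) * (s^(α-1)/(s+ρ⁻¹)) := by
    intro s hs
    have hs0 : (0:ℝ) < s := hs
    have h1 : 0 < s + ρ := by linarith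
    have h2 : 0 < s + ρ⁻¹ := by linarith
    have h3 : 0 < (ρ + ρ⁻¹) + s + s⁻¹ := by
      have := inv_pos.mpr hs0; linarith
    have hwkey : ρ + ρ⁻¹ + s + s⁻¹ = ((s+ρ)*(s+ρ⁻¹))/s := by
      rw [eq_div_iff (ne_of_gt hs0)]
      field_simp
      ring
    rw [pow_one, hwkey, div_div_eq_mul_div]
    have hSne : ρ - ρ⁻¹ ≠ 0 := ne_of_gt hS
    have h1ne : s + ρ ≠ 0 := ne_of_gt h1
    have h2ne : s + ρ⁻¹ ≠ 0 := ne_of_gt h2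
    generalize hti : ρ⁻¹ = t at h2ne hSne ⊢
    field_simp
    ring
  have hint1 : IntegrableOn (fun s : ℝ => (ρ/(ρ-ρ⁻¹)) * (s^(α-1)/(s+ρ))) (Ioi 0) :=
    (frac_integrable hα hα1 hρ0).const_mul _
  have hint2 : IntegrableOn (fun s : ℝ => (ρ⁻¹/(ρ-ρ⁻¹)) * (s^(α-1)/(s+ρ⁻¹))) (Ioi 0) :=
    (frac_integrable hα hα1 hρi0).const_mul _
  have : Gj α 1 (ρ + ρ⁻¹)
      = ∫ s in Ioi (0:ℝ), ((ρ/(ρ-ρ⁻¹)) * (s^(α-1)/(s+ρ))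
          - (ρ⁻¹/(ρ-ρ⁻¹)) * (s^(α-1)/(s+ρ⁻¹))) := by
    rw [Gj]
    exact setIntegral_congr_fun measurableSet_Ioi hpt
  rw [this, integral_sub hint1 hint2, integral_const_mul, integral_const_mul,
    frac_eval hα hα1 hρ0, frac_eval hα hα1 hρi0]
  have e1 : ρ * ρ^(α-1) = ρ^α := by
    nth_rewrite 1 [← Real.rpow_one ρ]
    rw [← Real.rpow_add hρ0]
    norm_num
  have e2 : ρ⁻¹ * (ρ⁻¹)^(α-1) = ρ^(-α) := by
    nth_rewrite 1 [← Real.rpow_one ρ⁻¹]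
    rw [← Real.rpow_add hρi0, Real.inv_rpow hρ0.le, ← Real.rpow_neg hρ0.le]
    norm_num
  have hSne : ρ - ρ⁻¹ ≠ 0 := ne_of_gt hS
  rw [← e1, ← e2]
  field_simp

theorem altM_const {m : ℕ} {s : Set ℝ} (hso : IsOpen s) {c : ℝ} (hc : 0 ≤ c) :
    AltM m (fun _ => c) s := by
  induction m generalizing c with
  | zero => exact ⟨fun x _ => hc, fun x _ y _ _ => le_refl c⟩
  | succ m IH =>
    refine ⟨fun x _ => hc, differentiableOn_const c, ?_⟩
    refine altM_congr (fun x hx => ?_) (IH (le_refl (0:ℝ)))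
    rw [derivWithin_fun_const, Pi.zero_apply]
    ring

/-- `ρ(w) = (w + √(w²-4))/2`. -/
def rhoF (w : ℝ) : ℝ := (w + Real.sqrt (w^2 - 4)) / 2

/-- `ψ_α(w) = ρ(w)^α + ρ(w)^(-α)`. -/
def psiF (α : ℝ) (w : ℝ) : ℝ := rhoF w ^ α + rhoF w ^ (-α)

section rho
variable {w : ℝ} (hw : 2 < w)
include hw

theorem sq_sub_pos : 0 < w^2 - 4 := by nlinarith

theorem sqrtS_pos : 0 < Real.sqrt (w^2 - 4) := Real.sqrt_pos.mpr (sq_sub_pos hw)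

theorem sqrtS_sq : Real.sqrt (w^2 - 4) ^ 2 = w^2 - 4 :=
  Real.sq_sqrt (sq_sub_pos hw).le

theorem rhoF_gt_one : 1 < rhoF w := by
  have := sqrtS_pos hw
  rw [rhoF]; linarith

theorem rhoF_pos : 0 < rhoF w := lt_trans one_pos (rhoF_gt_one hw)

theorem rhoF_inv : (rhoF w)⁻¹ = (w - Real.sqrt (w^2 - 4)) / 2 := by
  have h2 := sqrtS_sq hw
  refine inv_eq_of_mul_eq_one_right ?_
  rw [rhoF]
  nlinarith

theorem rhoF_add_inv : rhoF w + (rhoF w)⁻¹ = w := by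
  rw [rhoF_inv hw, rhoF]; ring

theorem rhoF_sub_inv : rhoF w - (rhoF w)⁻¹ = Real.sqrt (w^2 - 4) := by
  rw [rhoF_inv hw, rhoF]; ring

theorem rhoF_hasDeriv : HasDerivAt rhoF (rhoF w / Real.sqrt (w^2 - 4)) w := by
  have hpos := sq_sub_pos hw
  have hSpos := sqrtS_pos hw
  have h1 : HasDerivAt (fun y : ℝ => y^2 - 4) (2*w) w := by
    simpa using (hasDerivAt_pow 2 w).sub_const 4
  have hsqrt : HasDerivAt (fun y : ℝ => Real.sqrt (y^2 - 4))
      ((2*w) / (2 * Real.sqrt (w^2 - 4))) w := h1.sqrt (ne_of_gt hpos)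
  have h2 : HasDerivAt rhoF ((1 + 2 * w / (2 * Real.sqrt (w^2-4))) / 2) w :=
    ((hasDerivAt_id w).add hsqrt).div_const 2
  convert h2 using 1
  rw [rhoF]
  field_simp
  ring

theorem psiF_hasDeriv {α : ℝ} :
    HasDerivAt (psiF α)
      (α * ((rhoF w ^ α - rhoF w ^ (-α)) / (rhoF w - (rhoF w)⁻¹))) w := by
  have hρpos := rhoF_pos hw
  have hSpos := sqrtS_pos hw
  have hρd := rhoF_hasDeriv hw
  have h1 : HasDerivAt (fun y : ℝ => rhoF y ^ α)
      (α * rhoF w ^ (α-1) * (rhoF w / Real.sqrt (w^2-4))) w :=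
    (Real.hasDerivAt_rpow_const (Or.inl (ne_of_gt hρpos))).comp w hρd
  have h2 : HasDerivAt (fun y : ℝ => rhoF y ^ (-α))
      ((-α) * rhoF w ^ (-α-1) * (rhoF w / Real.sqrt (w^2-4))) w :=
    (Real.hasDerivAt_rpow_const (Or.inl (ne_of_gt hρpos))).comp w hρd
  have hsum : HasDerivAt (fun y : ℝ => rhoF y ^ α + rhoF y ^ (-α)) _ w := h1.add h2
  have heq : (fun y : ℝ => rhoF y ^ α + rhoF y ^ (-α)) = psiF α := rfl
  rw [heq] at hsum
  convert hsum using 1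
  rw [rhoF_sub_inv hw]
  have e1 : rhoF w ^ (α-1) * rhoF w = rhoF w ^ α := by
    nth_rewrite 2 [← Real.rpow_one (rhoF w)]
    rw [← Real.rpow_add hρpos]
    norm_num
  have e2 : rhoF w ^ (-α-1) * rhoF w = rhoF w ^ (-α) := by
    nth_rewrite 2 [← Real.rpow_one (rhoF w)]
    rw [← Real.rpow_add hρpos]
    norm_num
  rw [← e1, ← e2]
  field_simp
  ring

theorem psiF_gt_two {α : ℝ} (hα : 0 < α) : 2 < psiF α w := by
  have hρ1 := rhoF_gt_one hw
  have hρpos := rhoF_pos hw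
  have hA1 : 1 < rhoF w ^ α :=
    Real.one_lt_rpow_iff_of_pos hρpos |>.mpr (Or.inl ⟨hρ1, hα⟩)
  have hA0 : 0 < rhoF w ^ α := lt_trans one_pos hA1
  rw [psiF, Real.rpow_neg hρpos.le]
  have key : rhoF w ^ α + (rhoF w ^ α)⁻¹ - 2 = (rhoF w ^ α - 1)^2 / (rhoF w ^ α) := by
    field_simp
    ring
  have : 0 < (rhoF w ^ α - 1)^2 / (rhoF w ^ α) :=
    div_pos (pow_pos (by linarith) 2) hA0
  linarith [key ▸ this]

end rho

theorem psiF_eval {α v : ℝ} (hv : 0 < v) : psiF α (v + v⁻¹) = v ^ α + v ^ (-α) := by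
  have hvne : v ≠ 0 := ne_of_gt hv
  have hsq : (v + v⁻¹)^2 - 4 = (v - v⁻¹)^2 := by
    field_simp
    ring
  have hsqrt : Real.sqrt ((v + v⁻¹)^2 - 4) = |v - v⁻¹| := by
    rw [hsq, Real.sqrt_sq_eq_abs]
  rcases le_or_gt 1 v with hv1 | hv1
  · have hvi : v⁻¹ ≤ 1 := by
      rw [inv_le_one_iff₀]; right; exact hv1
    have habs : |v - v⁻¹| = v - v⁻¹ := abs_of_nonneg (by linarith)
    have hrho : rhoF (v + v⁻¹) = v := by
      rw [rhoF, hsqrt, habs]; ring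
    rw [psiF, hrho]
  · have hvi : 1 < v⁻¹ := by
      rw [lt_inv_comm₀] <;> simp [hv, hv1]
    have habs : |v - v⁻¹| = v⁻¹ - v := by
      rw [abs_of_nonpos (by linarith)]; ring
    have hrho : rhoF (v + v⁻¹) = v⁻¹ := by
      rw [rhoF, hsqrt, habs]; ring
    rw [psiF, hrho, Real.inv_rpow hv.le, ← Real.rpow_neg hv.le, Real.inv_rpow hv.le,
      ← Real.rpow_neg hv.le, neg_neg, add_comm]

/-- Key: the within-derivative of `ψ_α` on `(2,∞)` is `AltM` of every order. -/
theorem psiF_deriv_altM {α : ℝ} (hα : 0 < α) (hα1 : α ≤ 1) (m : ℕ) :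
    AltM m (fun w => derivWithin (psiF α) (Set.Ioi 2) w) (Set.Ioi 2) := by
  rcases eq_or_lt_of_le hα1 with heq | hlt
  · subst heq
    refine altM_congr (fun x hx => ?_) (altM_const (c := (1:ℝ)) isOpen_Ioi one_pos.le)
    have hx2 : (2:ℝ) < x := hx
    have hEq : EqOn (id : ℝ → ℝ) (psiF 1) (Set.Ioi 2) := by
      intro y hy
      have hy2 : (2:ℝ) < y := hy
      simp only [psiF, Real.rpow_one, Real.rpow_neg_one]
      exact (rhoF_add_inv hy2).symm
    have : derivWithin (psiF 1) (Set.Ioi 2) x = derivWithin (id : ℝ → ℝ) (Set.Ioi 2) x :=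
      (derivWithin_congr hEq (hEq hx)).symm
    rw [this, derivWithin_id x _ (uIoi2.uniqueDiffWithinAt hx)]
  · have hIa := Ia_pos hα hlt
    refine altM_congr (fun x hx => ?_) (altM_const_mul (c := α * (Ia α)⁻¹) isOpen_Ioi
      (mul_nonneg hα.le (inv_pos.mpr hIa).le) (Gj_altM hα hlt m (le_refl 1)))
    have hx2 : (2:ℝ) < x := hx
    have hd : derivWithin (psiF α) (Set.Ioi 2) x
        = α * ((rhoF x ^ α - rhoF x ^ (-α)) / (rhoF x - (rhoF x)⁻¹)) := by
      rw [derivWithin_of_isOpen isOpen_Ioi hx, (psiF_hasDeriv hx2).deriv]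
    have hG : Gj α 1 x = Ia α * ((rhoF x ^ α - rhoF x ^ (-α)) / (rhoF x - (rhoF x)⁻¹)) := by
      have := G1_eval hα hlt (rhoF_gt_one hx2)
      rwa [rhoF_add_inv hx2] at this
    rw [hd, hG, mul_assoc, ← mul_assoc (Ia α)⁻¹, inv_mul_cancel₀ (ne_of_gt hIa), one_mul]

/-! ### Measure-theoretic part -/

theorem measurable_rpow_const' (q : ℝ) : Measurable fun x : ℝ => x ^ q :=
  measurable_of_continuousOn_compl_singleton 0
    (fun x hx => (Real.continuousAt_rpow_const x q (Or.inl hx)).continuousWithinAt)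

/-- one-dimensional change of variables for lintegrals (arbitrary integrand). -/
theorem lintegral_image_eq_lintegral_abs_deriv_mul' {s : Set ℝ} {f f' : ℝ → ℝ}
    (hs : MeasurableSet s) (hf' : ∀ x ∈ s, HasDerivWithinAt f (f' x) s x)
    (hf : InjOn f s) (g : ℝ → ℝ≥0∞) :
    ∫⁻ x in f '' s, g x = ∫⁻ x in s, ENNReal.ofReal |f' x| * g (f x) := by
  simpa only [ContinuousLinearMap.det_toSpanSingleton] using
    lintegral_image_eq_lintegral_abs_det_fderiv_mul volume hs
      (fun x hx => (hf' x hx).hasFDerivWithinAt) hf g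

/-- The density of `y = x^q`. -/
def gdens (f : ℝ → ℝ) (q : ℝ) (y : ℝ) : ℝ :=
  if 0 < y then |q⁻¹| * y ^ (q⁻¹ - 1) * f (y ^ q⁻¹) else 0

theorem map_rpow_withDensity (f : ℝ → ℝ) {q : ℝ} (hq : q ≠ 0)
    (hnull : (volume.withDensity fun x => ENNReal.ofReal (f x)) (Set.Iic 0) = 0) :
    Measure.map (fun x : ℝ => x ^ q) (volume.withDensity fun x => ENNReal.ofReal (f x))
      = volume.withDensity fun y => ENNReal.ofReal (gdens f q y) := by
  set ν := volume.withDensity fun x => ENNReal.ofReal (f x) with hν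
  set r := q⁻¹ with hr
  have hqr : q * r = 1 := mul_inv_cancel₀ hq
  have hrq : r * q = 1 := by rw [mul_comm]; exact hqr
  refine Measure.ext fun s hs => ?_
  rw [Measure.map_apply (measurable_rpow_const' q) hs]
  set B := (fun x : ℝ => x ^ q) ⁻¹' s with hB
  have hBmeas : MeasurableSet B := (measurable_rpow_const' q) hs
  -- restrict to positive part on both sides
  have hsplit : ∀ (μ : Measure ℝ) (A : Set ℝ), μ (A ∩ Set.Iic 0) = 0 → μ A = μ (A ∩ Ioi 0) := by
    intro μ A h0
    have hA : A = (A ∩ Ioi 0) ∪ (A ∩ Iic 0) := by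
      rw [← inter_union_distrib_left, union_comm, Set.Iic_union_Ioi, inter_univ]
    nth_rewrite 1 [hA]
    refine le_antisymm ((measure_union_le _ _).trans ?_) (measure_mono subset_union_left)
    rw [h0, add_zero]
  have hL : ν B = ν (B ∩ Ioi 0) :=
    hsplit ν B (measure_mono_null inter_subset_right hnull)
  have hRnull : (volume.withDensity fun y => ENNReal.ofReal (gdens f q y)) (s ∩ Set.Iic 0)
      = 0 := by
    rw [withDensity_apply _ (hs.inter measurableSet_Iic)]
    have : ∫⁻ y in s ∩ Set.Iic 0, ENNReal.ofReal (gdens f q y)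
        = ∫⁻ _ in s ∩ Set.Iic 0, (0:ℝ≥0∞) := by
      refine setLIntegral_congr_fun (hs.inter measurableSet_Iic) ?_
      intro y hy
      have : ¬ (0 < y) := not_lt.mpr hy.2
      simp [gdens, this]
    rw [this, lintegral_zero]
  have hR : (volume.withDensity fun y => ENNReal.ofReal (gdens f q y)) s
      = (volume.withDensity fun y => ENNReal.ofReal (gdens f q y)) (s ∩ Ioi 0) := by
    exact hsplit _ s hRnull
  rw [hL, hR, withDensity_apply _ (hBmeas.inter measurableSet_Ioi),
    withDensity_apply _ (hs.inter measurableSet_Ioi)]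
  -- the image identity
  have hpow_qr : ∀ y : ℝ, 0 < y → (y ^ r) ^ q = y := by
    intro y hy
    rw [← Real.rpow_mul hy.le, hrq, Real.rpow_one]
  have hpow_rq : ∀ x : ℝ, 0 < x → (x ^ q) ^ r = x := by
    intro x hx
    rw [← Real.rpow_mul hx.le, hqr, Real.rpow_one]
  have himg : (fun y : ℝ => y ^ r) '' (s ∩ Ioi 0) = B ∩ Ioi 0 := by
    ext x
    constructor
    · rintro ⟨y, ⟨hys, hy0⟩, rfl⟩
      have hy0' : (0:ℝ) < y := hy0
      refine ⟨?_, Real.rpow_pos_of_pos hy0' r⟩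
      have : (y ^ r) ^ q = y := hpow_qr y hy0'
      simpa only [hB, mem_preimage, this] using hys
    · rintro ⟨hxB, hx0⟩
      have hx0' : (0:ℝ) < x := hx0
      exact ⟨x ^ q, ⟨hxB, Real.rpow_pos_of_pos hx0' q⟩, hpow_rq x hx0'⟩
  have hderiv : ∀ y ∈ s ∩ Ioi 0,
      HasDerivWithinAt (fun y : ℝ => y ^ r) (r * y ^ (r-1)) (s ∩ Ioi 0) y :=
    fun y hy => (Real.hasDerivAt_rpow_const (Or.inl (ne_of_gt hy.2))).hasDerivWithinAt
  have hinj : InjOn (fun y : ℝ => y ^ r) (s ∩ Ioi 0) := by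
    intro a ha b hb hab
    have := congrArg (fun z : ℝ => z ^ q) hab
    simpa only [hpow_qr a ha.2, hpow_qr b hb.2] using this
  rw [← himg, lintegral_image_eq_lintegral_abs_deriv_mul' (hs.inter measurableSet_Ioi)
    hderiv hinj]
  refine setLIntegral_congr_fun (hs.inter measurableSet_Ioi) ?_
  intro y hy
  have hy0 : (0:ℝ) < y := hy.2
  have habs : |r * y ^ (r-1)| = |r| * y ^ (r-1) := by
    rw [abs_mul, abs_of_pos (Real.rpow_pos_of_pos hy0 _)]
  have hgd : gdens f q y = (|r| * y ^ (r-1)) * f (y ^ r) := by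
    simp only [gdens, ← hr, if_pos hy0]
  beta_reduce
  rw [habs, hgd,
    ENNReal.ofReal_mul (mul_nonneg (abs_nonneg r) (Real.rpow_pos_of_pos hy0 _).le)]

/-! ### Pinned definitions and main theorem -/

/-- If X is a positive random variable whose distribution has an HM_k density
and |q| ≥ 1, then the distribution of X^q has an HM_k density. -/
theorem HMk_rpow_closed
    {Ω : Type*} [MeasurableSpace Ω] {P : Measure Ω} [IsProbabilityMeasure P]
    (k : ℕ) (hk : 1 ≤ k) (X : Ω → ℝ) (hX : Measurable X)
    (hXpos : ∀ᵐ ω ∂P, 0 < X ω)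
    (f : ℝ → ℝ) (hf : IsHMk k f)
    (hXdens : Measure.map X P = volume.withDensity fun x => ENNReal.ofReal (f x))
    (q : ℝ) (hq : 1 ≤ |q|) :
    ∃ g : ℝ → ℝ, IsHMk k g ∧
      Measure.map (fun ω => X ω ^ q) P = volume.withDensity fun x => ENNReal.ofReal (g x) := by
  have hq0 : q ≠ 0 := by
    intro h
    rw [h] at hq
    norm_num at hq
  have hr0 : q⁻¹ ≠ 0 := inv_ne_zero hq0
  have hα : 0 < |q⁻¹| := abs_pos.mpr hr0
  have hα1 : |q⁻¹| ≤ 1 := by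
    rw [abs_inv]
    have h0 : (0:ℝ) < |q| := lt_of_lt_of_le one_pos hq
    rw [inv_le_one_iff₀]
    right
    exact hq
  refine ⟨gdens f q, ⟨?_, ?_⟩, ?_⟩
  · -- nonnegativity
    intro y hy
    simp only [gdens, if_pos hy]
    exact mul_nonneg (mul_nonneg (abs_nonneg _) (Real.rpow_pos_of_pos hy _).le)
      (hf.1 _ (Real.rpow_pos_of_pos hy _))
  · -- the h-function conditions
    intro u hu
    obtain ⟨m, rfl⟩ : ∃ m, k = m + 1 := ⟨k - 1, by omega⟩
    have hu' : 0 < u ^ q⁻¹ := Real.rpow_pos_of_pos hu _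
    obtain ⟨h, hfe, c1, c2, c3⟩ := hf.2 (u ^ q⁻¹) hu'
    have hAlt : AltM m h (Set.Ioi 2) := (altM_iff_HMc m h).mpr ⟨c1, c2, c3⟩
    have hC0 : 0 ≤ |q⁻¹|^2 * (u*u) ^ (q⁻¹ - 1) :=
      mul_nonneg (by positivity) (Real.rpow_pos_of_pos (by positivity) _).le
    have hdiffψ : DifferentiableOn ℝ (psiF |q⁻¹|) (Set.Ioi 2) := fun x hx =>
      (psiF_hasDeriv hx).differentiableAt.differentiableWithinAt
    have hmapsψ : MapsTo (psiF |q⁻¹|) (Set.Ioi 2) (Set.Ioi 2) := fun x hx =>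
      psiF_gt_two hx hα
    have hAltg : AltM m (fun w => (|q⁻¹|^2 * (u*u) ^ (q⁻¹ - 1)) * h (psiF |q⁻¹| w))
        (Set.Ioi 2) :=
      altM_const_mul isOpen_Ioi hC0
        (altM_comp isOpen_Ioi (convex_Ioi 2) isOpen_Ioi (convex_Ioi 2) hAlt hdiffψ hmapsψ
          (psiF_deriv_altM hα hα1 m))
    obtain ⟨d1, d2, d3⟩ := (altM_iff_HMc m _).mp hAltg
    refine ⟨fun w => (|q⁻¹|^2 * (u*u) ^ (q⁻¹ - 1)) * h (psiF |q⁻¹| w), ?_, d1, d2, d3⟩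
    -- the functional equation
    intro v hv
    have huv : (0:ℝ) < u * v := mul_pos hu hv
    have hudv : (0:ℝ) < u / v := div_pos hu hv
    have g1 : gdens f q (u*v) = |q⁻¹| * (u*v)^(q⁻¹-1) * f ((u*v)^q⁻¹) := by
      simp only [gdens, if_pos huv]
    have g2 : gdens f q (u/v) = |q⁻¹| * (u/v)^(q⁻¹-1) * f ((u/v)^q⁻¹) := by
      simp only [gdens, if_pos hudv]
    have e1 : (u*v)^q⁻¹ = u^q⁻¹ * v^q⁻¹ := Real.mul_rpow hu.le hv.le
    have e2 : (u/v)^q⁻¹ = u^q⁻¹ / v^q⁻¹ := Real.div_rpow hu.le hv.le _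
    have hv' : (0:ℝ) < v ^ q⁻¹ := Real.rpow_pos_of_pos hv _
    have e3 : (v^q⁻¹)⁻¹ = v^(-q⁻¹) := (Real.rpow_neg hv.le _).symm
    have e4 : v^q⁻¹ + v^(-q⁻¹) = psiF |q⁻¹| (v + v⁻¹) := by
      rw [psiF_eval hv]
      rcases abs_cases q⁻¹ with ⟨habs, _⟩ | ⟨habs, _⟩
      · rw [habs]
      · rw [habs, neg_neg, add_comm]
    have e5 : (u*v)^(q⁻¹-1) * (u/v)^(q⁻¹-1) = (u*u)^(q⁻¹-1) := by
      rw [← Real.mul_rpow huv.le hudv.le]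
      congr 1
      field_simp
    have hfev := hfe (v^q⁻¹) hv'
    calc gdens f q (u*v) * gdens f q (u/v)
        = |q⁻¹|^2 * ((u*v)^(q⁻¹-1) * (u/v)^(q⁻¹-1))
            * (f ((u*v)^q⁻¹) * f ((u/v)^q⁻¹)) := by
          rw [g1, g2]; ring
      _ = |q⁻¹|^2 * (u*u)^(q⁻¹-1) * (f (u^q⁻¹ * v^q⁻¹) * f (u^q⁻¹ / v^q⁻¹)) := by
          rw [e5, e1, e2]
      _ = |q⁻¹|^2 * (u*u)^(q⁻¹-1) * h (v^q⁻¹ + (v^q⁻¹)⁻¹) := by rw [hfev]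
      _ = (|q⁻¹|^2 * (u*u) ^ (q⁻¹ - 1)) * h (psiF |q⁻¹| (v + v⁻¹)) := by
          rw [e3, e4]
  · -- the measure identity
    have hXq : (fun ω => X ω ^ q) = (fun x : ℝ => x ^ q) ∘ X := rfl
    rw [hXq, ← Measure.map_map (measurable_rpow_const' q) hX, hXdens]
    refine map_rpow_withDensity f hq0 ?_
    rw [← hXdens, Measure.map_apply hX measurableSet_Iic]
    have hset : X ⁻¹' Set.Iic 0 = {ω | ¬ (0 < X ω)} := by
      ext ω
      simp [not_lt]
    rw [hset]
    rw [ae_iff] at hXpos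
    exact hXpos
end
end

section
/- Let a > 1, b > 1 and t > 0, and set T = t + t⁻¹, A = ab + (ab)⁻¹, B = a/b + b/a. Then ∫_{1/b}^{b} t/((v + t/a)(v + at)) dv = (a − a⁻¹)⁻¹ · log((T + A)/(T + B)). Moreover, for a = 1 the integral equals (b − b⁻¹)/(T + b + b⁻¹). -/
open MeasureTheory ProbabilityTheory Real Set

noncomputable section

/-- For a > 1, b > 1, t > 0, with T = t + t⁻¹, A = ab + (ab)⁻¹, B = a/b + b/a,
∫_{1/b}^b t/((v + t/a)(v + at)) dv = (a − a⁻¹)⁻¹ log((T + A)/(T + B)); and for a = 1 the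
integral equals (b − b⁻¹)/(T + b + b⁻¹). -/
theorem partial_fraction_integral
    (a b t : ℝ) (ha : 1 < a) (hb : 1 < b) (ht : 0 < t) :
    (∫ v in Set.Ioo b⁻¹ b, t / ((v + t / a) * (v + a * t))) =
      (a - a⁻¹)⁻¹ *
        Real.log (((t + t⁻¹) + (a * b + (a * b)⁻¹)) / ((t + t⁻¹) + (a / b + b / a))) ∧
    (∫ v in Set.Ioo b⁻¹ b, t / ((v + t) * (v + t))) =
      (b - b⁻¹) / ((t + t⁻¹) + b + b⁻¹) := by
  have ha0 : (0:ℝ) < a := lt_trans one_pos ha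
  have hb0 : (0:ℝ) < b := lt_trans one_pos hb
  have hbi : (0:ℝ) < b⁻¹ := inv_pos.mpr hb0
  have hle : b⁻¹ ≤ b := ((inv_lt_one_of_one_lt₀ hb).trans hb).le
  have hane : a - a⁻¹ ≠ 0 := by
    have : a⁻¹ < a := lt_trans (inv_lt_one_of_one_lt₀ ha) ha
    linarith
  constructor
  · have hderiv : ∀ x ∈ Set.uIcc b⁻¹ b,
        HasDerivAt (fun v => (a - a⁻¹)⁻¹ * (Real.log (v + t/a) - Real.log (v + a*t)))
          (t / ((x + t/a) * (x + a*t))) x := by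
      intro x hx
      rw [Set.uIcc_of_le hle] at hx
      have hx0 : 0 < x := lt_of_lt_of_le hbi hx.1
      have h1 : 0 < x + t/a := add_pos hx0 (div_pos ht ha0)
      have h2 : 0 < x + a*t := add_pos hx0 (mul_pos ha0 ht)
      have d1 : HasDerivAt (fun v : ℝ => Real.log (v + t/a)) (x + t/a)⁻¹ x := by
        have := ((hasDerivAt_id x).add_const (t/a)).log h1.ne'
        simpa using this
      have d2 : HasDerivAt (fun v : ℝ => Real.log (v + a*t)) (x + a*t)⁻¹ x := by
        have := ((hasDerivAt_id x).add_const (a*t)).log h2.ne'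
        simpa using this
      have hd := (d1.sub d2).const_mul (a - a⁻¹)⁻¹
      convert hd using 1
      · rfl
      · rfl
      · rfl
      have haa : 0 < a - a⁻¹ := by
        have : a⁻¹ < a := lt_trans (inv_lt_one_of_one_lt₀ ha) ha
        linarith
      rw [inv_sub_inv h1.ne' h2.ne', eq_comm, inv_mul_eq_div, div_div,
        div_eq_div_iff (mul_pos (mul_pos h1 h2) haa).ne' (mul_pos h1 h2).ne']
      field_simp
      ring
    have hint : IntervalIntegrable (fun v => t / ((v + t/a) * (v + a*t)))
        volume b⁻¹ b := by
      apply ContinuousOn.intervalIntegrable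
      apply ContinuousOn.div continuousOn_const
      · fun_prop
      · intro x hx
        rw [Set.uIcc_of_le hle] at hx
        have hx0 : 0 < x := lt_of_lt_of_le hbi hx.1
        have h1 : 0 < x + t/a := add_pos hx0 (div_pos ht ha0)
        have h2 : 0 < x + a*t := add_pos hx0 (mul_pos ha0 ht)
        exact (mul_pos h1 h2).ne'
    have h1b : 0 < b + t/a := add_pos hb0 (div_pos ht ha0)
    have h2b : 0 < b + a*t := add_pos hb0 (mul_pos ha0 ht)
    have h1i : 0 < b⁻¹ + t/a := add_pos hbi (div_pos ht ha0)
    have h2i : 0 < b⁻¹ + a*t := add_pos hbi (mul_pos ha0 ht)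
    have hti : 0 < t⁻¹ := inv_pos.mpr ht
    have hratio : ((t + t⁻¹) + (a * b + (a * b)⁻¹)) / ((t + t⁻¹) + (a / b + b / a)) =
        ((b + t/a) * (b⁻¹ + a*t)) / ((b⁻¹ + t/a) * (b + a*t)) := by
      rw [div_eq_div_iff (by positivity) (by positivity)]
      field_simp
      ring
    rw [← MeasureTheory.integral_Ioc_eq_integral_Ioo, ← intervalIntegral.integral_of_le hle,
        intervalIntegral.integral_eq_sub_of_hasDerivAt hderiv hint, hratio,
        Real.log_div (by positivity) (by positivity),
        Real.log_mul h1b.ne' h2i.ne', Real.log_mul h1i.ne' h2b.ne']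
    ring
  · have hderiv : ∀ x ∈ Set.uIcc b⁻¹ b,
        HasDerivAt (fun v => -(t * (v + t)⁻¹)) (t / ((x + t) * (x + t))) x := by
      intro x hx
      rw [Set.uIcc_of_le hle] at hx
      have hx0 : 0 < x := lt_of_lt_of_le hbi hx.1
      have h1 : 0 < x + t := add_pos hx0 ht
      have d1 : HasDerivAt (fun v : ℝ => v + t) 1 x := (hasDerivAt_id x).add_const t
      have d2 := ((d1.inv h1.ne').const_mul t).neg
      convert d2 using 1
      · rfl
      · rfl
      · rfl
      rw [neg_div, mul_neg, neg_neg, mul_one_div, sq]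
    have hint : IntervalIntegrable (fun v => t / ((v + t) * (v + t)))
        volume b⁻¹ b := by
      apply ContinuousOn.intervalIntegrable
      apply ContinuousOn.div continuousOn_const
      · fun_prop
      · intro x hx
        rw [Set.uIcc_of_le hle] at hx
        have hx0 : 0 < x := lt_of_lt_of_le hbi hx.1
        have h1 : 0 < x + t := add_pos hx0 ht
        exact (mul_pos h1 h1).ne'
    rw [← MeasureTheory.integral_Ioc_eq_integral_Ioo, ← intervalIntegral.integral_of_le hle,
        intervalIntegral.integral_eq_sub_of_hasDerivAt hderiv hint]
    have h1 : 0 < b + t := add_pos hb0 ht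
    have h2 : 0 < b⁻¹ + t := add_pos hbi ht
    have hti : 0 < t⁻¹ := inv_pos.mpr ht
    have hden : t + t⁻¹ + b + b⁻¹ ≠ 0 := by positivity
    field_simp
    ring
end
end

section
/- Let k ≥ 1 be an integer, a > 1, b > 1, and for t > 0 define J_k(t) = ∫_{1/b}^{b} t^k ((b − v)(v − b⁻¹))^{k−1} / ((v + t/a)^k (v + at)^k) dv. Set A = ab + (ab)⁻¹ and B = a/b + b/a. Then there exists a function g on (2,∞) such that J_k(t) = g(t + t⁻¹) for all t > 0, g is completely monotone on (2,∞), and its k-th derivative satisfies g^{(k)}(T) = (−1)^k (k−1)! (b − b⁻¹)^{2k−1} / ((T + A)^k (T + B)^k) for all T > 2. -/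
open MeasureTheory ProbabilityTheory Real Set

noncomputable section

section JkAuxSection


open MeasureTheory Real Set Filter

namespace JkCore

open intervalIntegral in
lemma beta_nat : ∀ (j i : ℕ), (∫ x in (0:ℝ)..1, x^i * (1-x)^j)
    = (Nat.factorial i * Nat.factorial j : ℝ) / (Nat.factorial (i+j+1)) := by
  intro j
  induction j with
  | zero =>
    intro i
    simp only [pow_zero, mul_one, integral_pow, one_pow, Nat.factorial_zero, Nat.cast_one,
      Nat.add_zero]
    rw [Nat.factorial_succ]
    push_cast
    rw [zero_pow (by omega)]
    field_simp
    norm_num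
  | succ j ih =>
    intro i
    have hu : ∀ x ∈ uIcc (0:ℝ) 1, HasDerivAt (fun x : ℝ => (1-x)^(j+1))
        (((j:ℝ)+1) * (1-x)^j * (-1)) x := by
      intro x _
      have h1 : HasDerivAt (fun x : ℝ => 1 - x) (-1) x := (hasDerivAt_id x).const_sub 1
      simpa using h1.fun_pow (j+1)
    have hv : ∀ x ∈ uIcc (0:ℝ) 1, HasDerivAt (fun x : ℝ => x^(i+1)/((i:ℝ)+1))
        (x^i) x := by
      intro x _
      have h1 := (hasDerivAt_pow (i+1) x).div_const ((i:ℝ)+1)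
      refine h1.congr_deriv ?_
      symm
      have : ((i:ℝ)+1) ≠ 0 := by positivity
      field_simp
      rw [Nat.add_sub_cancel]; push_cast; ring
    have hIBP := intervalIntegral.integral_mul_deriv_eq_deriv_mul hu hv
      (by apply Continuous.intervalIntegrable; continuity)
      (by apply Continuous.intervalIntegrable; continuity)
    have key : (∫ x in (0:ℝ)..1, x^i * (1-x)^(j+1))
        = (((j:ℝ)+1)/((i:ℝ)+1)) * ∫ x in (0:ℝ)..1, x^(i+1) * (1-x)^j := by
      have e1 : (∫ x in (0:ℝ)..1, x^i * (1-x)^(j+1))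
          = ∫ x in (0:ℝ)..1, (1-x)^(j+1) * x^i := by
        congr 1; funext x; ring
      rw [e1, hIBP]
      rw [← intervalIntegral.integral_const_mul]
      simp only [sub_self, zero_pow (Nat.succ_ne_zero j), zero_mul, one_pow, zero_sub,
        zero_pow (Nat.succ_ne_zero i), sub_zero, mul_zero]
      have e2 : ∀ x : ℝ, ((j:ℝ) + 1) * (1 - x) ^ j * -1 * (x ^ (i + 1) / ((i:ℝ) + 1))
          = -(((j:ℝ)+1)/((i:ℝ)+1) * (x^(i+1)*(1-x)^j)) := fun x => by ring
      simp only [e2, intervalIntegral.integral_neg]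
      norm_num
    rw [key, ih (i+1)]
    have e3 : i + 1 + j + 1 = i + (j+1) + 1 := by omega
    rw [e3]
    have h1 : ((i:ℝ)+1) ≠ 0 := by positivity
    have h2 : ((Nat.factorial (i + (j+1) + 1) : ℝ)) ≠ 0 := by positivity
    rw [Nat.factorial_succ i, Nat.factorial_succ j]
    push_cast
    field_simp



/-- The parametric integral. -/
noncomputable def Ifn (m p : ℕ) (A B T : ℝ) : ℝ :=
  ∫ u in Ioo (0:ℝ) 1, (u*(1-u))^m / (T + (u*A + (1-u)*B))^p

variable {A B : ℝ}

lemma Lpos (hA : 0 ≤ A) (hB : 0 ≤ B) {T u : ℝ} (hT : 0 < T) (hu : u ∈ Icc (0:ℝ) 1) :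
    0 < T + (u*A + (1-u)*B) := by
  have h1 : 0 ≤ u*A := mul_nonneg hu.1 hA
  have h2 : 0 ≤ (1-u)*B := mul_nonneg (by linarith [hu.2]) hB
  linarith

lemma Lge (hA : 0 ≤ A) (hB : 0 ≤ B) {T u : ℝ} (hu : u ∈ Icc (0:ℝ) 1) :
    T ≤ T + (u*A + (1-u)*B) := by
  have h1 : 0 ≤ u*A := mul_nonneg hu.1 hA
  have h2 : 0 ≤ (1-u)*B := mul_nonneg (by linarith [hu.2]) hB
  linarith

lemma wle {u : ℝ} (hu : u ∈ Icc (0:ℝ) 1) (m : ℕ) : (u*(1-u))^m ≤ 1 := by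
  apply pow_le_one₀ (mul_nonneg hu.1 (by linarith [hu.2]))
  nlinarith [hu.1, hu.2]

lemma wnonneg {u : ℝ} (hu : u ∈ Icc (0:ℝ) 1) (m : ℕ) : 0 ≤ (u*(1-u))^m :=
  pow_nonneg (mul_nonneg hu.1 (by linarith [hu.2])) m

lemma integrableOn_I (m p : ℕ) (hA : 0 ≤ A) (hB : 0 ≤ B) {T : ℝ} (hT : 0 < T) :
    IntegrableOn (fun u : ℝ => (u*(1-u))^m / (T + (u*A + (1-u)*B))^p) (Ioo 0 1) := by
  apply IntegrableOn.mono_set _ Ioo_subset_Icc_self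
  apply ContinuousOn.integrableOn_Icc
  apply ContinuousOn.div (by fun_prop) (by fun_prop)
  intro u hu
  exact (pow_pos (Lpos hA hB hT hu) p).ne'

lemma Ifn_nonneg (m p : ℕ) (hA : 0 ≤ A) (hB : 0 ≤ B) {T : ℝ} (hT : 0 < T) :
    0 ≤ Ifn m p A B T := by
  apply setIntegral_nonneg measurableSet_Ioo
  intro u hu
  have hu' : u ∈ Icc (0:ℝ) 1 := Ioo_subset_Icc_self hu
  exact div_nonneg (wnonneg hu' m) (pow_nonneg (Lpos hA hB hT hu').le p)

lemma hasDerivAt_Ifn (m p : ℕ) (hA : 0 ≤ A) (hB : 0 ≤ B) {T : ℝ} (hT : 2 < T) :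
    HasDerivAt (fun S => Ifn m (p+1) A B S) (-((p:ℝ)+1) * Ifn m (p+2) A B T) T := by
  have hε : (0:ℝ) < (T-2)/2 := by linarith
  have hball : ∀ S ∈ Metric.ball T ((T-2)/2), (2:ℝ) < S := by
    intro S hS
    have := abs_lt.1 (mem_ball_iff_norm.1 hS)
    linarith [this.1]
  have key := hasDerivAt_integral_of_dominated_loc_of_deriv_le (μ := volume.restrict (Ioo (0:ℝ) 1))
    (F := fun S u => (u*(1-u))^m / (S + (u*A + (1-u)*B))^(p+1))
    (F' := fun S u => -((p:ℝ)+1) * ((u*(1-u))^m / (S + (u*A + (1-u)*B))^(p+2)))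
    (bound := fun _ => (p:ℝ)+1) (x₀ := T) (Metric.ball_mem_nhds T hε)
    ?_ ?_ ?_ ?_ ?_ ?_
  · have h2 := key.2
    rw [MeasureTheory.integral_const_mul] at h2
    exact h2
  · exact Eventually.of_forall fun S =>
      ((Measurable.div (by fun_prop) (by fun_prop)).aestronglyMeasurable)
  · exact integrableOn_I m (p+1) hA hB (by linarith)
  · exact (Measurable.mul measurable_const
      (Measurable.div (by fun_prop) (by fun_prop))).aestronglyMeasurable
  · filter_upwards [ae_restrict_mem measurableSet_Ioo] with u hu
    intro S hS
    have hS2 : (2:ℝ) < S := hball S hS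
    have hu' : u ∈ Icc (0:ℝ) 1 := Ioo_subset_Icc_self hu
    have hL : 1 ≤ S + (u*A + (1-u)*B) := le_trans (by linarith) (Lge hA hB hu')
    have hLp : (1:ℝ) ≤ (S + (u*A + (1-u)*B))^(p+2) := one_le_pow₀ hL
    rw [norm_mul, norm_div]
    have h1 : ‖(u*(1-u))^m‖ ≤ 1 := by
      rw [Real.norm_eq_abs, abs_of_nonneg (wnonneg hu' m)]; exact wle hu' m
    have h2 : (1:ℝ) ≤ ‖(S + (u*A + (1-u)*B))^(p+2)‖ := by
      rw [Real.norm_eq_abs, abs_of_nonneg (by linarith)]; exact hLp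
    have h3 : ‖(u*(1-u))^m‖ / ‖(S + (u*A + (1-u)*B))^(p+2)‖ ≤ 1 :=
      div_le_one_of_le₀ (le_trans h1 h2) (by linarith)
    have h4 : ‖-((p:ℝ)+1)‖ = (p:ℝ)+1 := by
      rw [norm_neg, Real.norm_eq_abs, abs_of_nonneg (by positivity)]
    calc ‖-((p:ℝ)+1)‖ * (‖(u*(1-u))^m‖ / ‖(S + (u*A + (1-u)*B))^(p+2)‖)
        ≤ ‖-((p:ℝ)+1)‖ * 1 := by
          apply mul_le_mul_of_nonneg_left h3 (norm_nonneg _)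
      _ = (p:ℝ)+1 := by rw [h4, mul_one]
  · exact (MeasureTheory.integrableOn_const (by simp [Real.volume_Ioo]))
  · filter_upwards [ae_restrict_mem measurableSet_Ioo] with u hu
    intro S hS
    have hS2 : (2:ℝ) < S := hball S hS
    have hu' : u ∈ Icc (0:ℝ) 1 := Ioo_subset_Icc_self hu
    set c := u*A + (1-u)*B with hc
    have hSc : 0 < S + c := Lpos hA hB (by linarith : (0:ℝ) < S) hu'
    have h1 : HasDerivAt (fun S : ℝ => (S + c)^(p+1)) (((p:ℝ)+1)*(S+c)^p) S := by
      simpa using ((hasDerivAt_id S).add_const c).fun_pow (p+1)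
    have h2 := (h1.fun_inv (pow_ne_zero _ hSc.ne')).const_mul ((u*(1-u))^m)
    have e : (u*(1-u))^m * (-(((p:ℝ)+1)*(S+c)^p) / ((S+c)^(p+1))^2)
        = -((p:ℝ)+1) * ((u*(1-u))^m / (S + c)^(p+2)) := by
      have hne : (S+c) ≠ 0 := hSc.ne'
      field_simp
      ring
    rw [← e]
    simpa only [div_eq_mul_inv] using h2

noncomputable def gfn (m : ℕ) (A B d : ℝ) : ℝ → ℝ := fun T => d * Ifn m (m+1) A B T

lemma iter_eq (m : ℕ) (hA : 0 ≤ A) (hB : 0 ≤ B) (d : ℝ) (n : ℕ) :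
    EqOn (iteratedDerivWithin n (gfn m A B d) (Ioi 2))
      (fun T => (-1:ℝ)^n * (∏ i ∈ Finset.range n, ((m:ℝ)+1+(i:ℕ))) * d * Ifn m (m+1+n) A B T)
      (Ioi 2) := by
  induction n with
  | zero =>
    intro T hT
    simp [gfn, iteratedDerivWithin_zero]
  | succ n ih =>
    intro T hT
    have hT2 : (2:ℝ) < T := hT
    have hu : UniqueDiffWithinAt ℝ (Ioi (2:ℝ)) T := isOpen_Ioi.uniqueDiffWithinAt hT
    rw [iteratedDerivWithin_succ, derivWithin_congr ih (ih hT)]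
    have e : m+1+n = (m+n)+1 := by omega
    have hd := (hasDerivAt_Ifn m (m+n) hA hB hT2).const_mul
      ((-1:ℝ)^n * (∏ i ∈ Finset.range n, ((m:ℝ)+1+(i:ℕ))) * d)
    rw [show (fun T => (-1:ℝ)^n * (∏ i ∈ Finset.range n, ((m:ℝ)+1+(i:ℕ))) * d
          * Ifn m (m+1+n) A B T)
        = (fun T => (-1:ℝ)^n * (∏ i ∈ Finset.range n, ((m:ℝ)+1+(i:ℕ))) * d
          * Ifn m ((m+n)+1) A B T) from by rw [e]]
    rw [(hd.hasDerivWithinAt).derivWithin hu]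
    rw [Finset.prod_range_succ, show m+1+(n+1) = (m+n)+2 from by omega]
    push_cast
    ring

noncomputable def gC (m : ℕ) (A B d : ℝ) : ℂ → ℂ := fun z =>
  (d:ℂ) * ∫ u in Ioo (0:ℝ) 1,
    (((u*(1-u))^m : ℝ) : ℂ) / (z + ((u*A + (1-u)*B : ℝ) : ℂ))^(m+1)

lemma gC_ofReal (m : ℕ) (A B d : ℝ) (T : ℝ) :
    gC m A B d (T : ℂ) = ((gfn m A B d T : ℝ) : ℂ) := by
  unfold gC gfn Ifn
  have e : (fun u : ℝ => (((u*(1-u))^m : ℝ) : ℂ) / ((T:ℂ) + ((u*A + (1-u)*B : ℝ) : ℂ))^(m+1))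
      = fun u : ℝ => (((u*(1-u))^m / (T + (u*A + (1-u)*B))^(m+1) : ℝ) : ℂ) := by
    funext u
    push_cast
    rfl
  rw [e]
  rw [show (fun u : ℝ => (((u*(1-u))^m / (T + (u*A + (1-u)*B))^(m+1) : ℝ) : ℂ))
      = fun u : ℝ => ((RCLike.ofReal ((u*(1-u))^m / (T + (u*A + (1-u)*B))^(m+1) : ℝ)) : ℂ)
    from rfl]
  rw [integral_ofReal]
  push_cast
  rfl

lemma diffOn_gC (m : ℕ) (hA : 0 ≤ A) (hB : 0 ≤ B) (d : ℝ) :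
    DifferentiableOn ℂ (gC m A B d) {z : ℂ | 2 < z.re} := by
  intro z₀ hz₀
  have hz₀' : (2:ℝ) < z₀.re := hz₀
  have hε : (0:ℝ) < (z₀.re - 2)/2 := by linarith
  have hball : ∀ z ∈ Metric.ball z₀ ((z₀.re - 2)/2), (2:ℝ) < z.re := by
    intro z hz
    have h1 : |(z - z₀).re| ≤ ‖z - z₀‖ := Complex.abs_re_le_norm _
    have h2 : ‖z - z₀‖ < (z₀.re - 2)/2 := mem_ball_iff_norm.1 hz
    have h3 : |z.re - z₀.re| < (z₀.re - 2)/2 := by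
      rw [← Complex.sub_re]; exact lt_of_le_of_lt h1 h2
    have := abs_lt.1 h3
    linarith [this.1]
  have hlb : ∀ z : ℂ, 2 < z.re → ∀ u ∈ Icc (0:ℝ) 1,
      1 ≤ ‖z + ((u*A + (1-u)*B : ℝ) : ℂ)‖ ∧ z + ((u*A + (1-u)*B : ℝ) : ℂ) ≠ 0 := by
    intro z hz u hu
    have h1 : 0 ≤ u*A := mul_nonneg hu.1 hA
    have h2 : 0 ≤ (1-u)*B := mul_nonneg (by linarith [hu.2]) hB
    have hre : 1 ≤ (z + ((u*A + (1-u)*B : ℝ) : ℂ)).re := by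
      simp only [Complex.add_re, Complex.ofReal_re]
      linarith
    have habs : 1 ≤ ‖z + ((u*A + (1-u)*B : ℝ) : ℂ)‖ :=
      le_trans hre (le_trans (le_abs_self _) (Complex.abs_re_le_norm _))
    refine ⟨habs, fun h => ?_⟩
    rw [h] at hre
    norm_num at hre
  have key := hasDerivAt_integral_of_dominated_loc_of_deriv_le
    (μ := volume.restrict (Ioo (0:ℝ) 1))
    (F := fun (z : ℂ) (u : ℝ) =>
      (((u*(1-u))^m : ℝ) : ℂ) / (z + ((u*A + (1-u)*B : ℝ) : ℂ))^(m+1))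
    (F' := fun (z : ℂ) (u : ℝ) =>
      -((m:ℂ)+1) * ((((u*(1-u))^m : ℝ) : ℂ) / (z + ((u*A + (1-u)*B : ℝ) : ℂ))^(m+2)))
    (bound := fun _ => (m:ℝ)+1) (x₀ := z₀) (Metric.ball_mem_nhds z₀ hε)
    ?_ ?_ ?_ ?_ ?_ ?_
  · have h2 := (key.2.const_mul (d:ℂ)).differentiableAt
    exact (h2.differentiableWithinAt).congr (fun z _ => rfl) rfl
  · exact Eventually.of_forall fun z =>
      ((Measurable.div (by fun_prop) (by fun_prop)).aestronglyMeasurable)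
  · apply IntegrableOn.mono_set _ Ioo_subset_Icc_self
    apply ContinuousOn.integrableOn_Icc
    apply ContinuousOn.div (by fun_prop) (by fun_prop)
    intro u hu
    exact pow_ne_zero _ ((hlb z₀ hz₀' u hu).2)
  · exact (Measurable.mul measurable_const
      (Measurable.div (by fun_prop) (by fun_prop))).aestronglyMeasurable
  · filter_upwards [ae_restrict_mem measurableSet_Ioo] with u hu
    intro z hz
    have hz2 := hball z hz
    have hu' : u ∈ Icc (0:ℝ) 1 := Ioo_subset_Icc_self hu
    obtain ⟨habs, -⟩ := hlb z hz2 u hu'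
    rw [norm_mul, norm_div]
    have h1 : ‖(((u*(1-u))^m : ℝ) : ℂ)‖ ≤ 1 := by
      rw [Complex.norm_real, Real.norm_eq_abs, abs_of_nonneg (wnonneg hu' m)]
      exact wle hu' m
    have h2 : (1:ℝ) ≤ ‖(z + ((u*A + (1-u)*B : ℝ) : ℂ))^(m+2)‖ := by
      rw [norm_pow]; exact one_le_pow₀ habs
    have h3 : ‖(((u*(1-u))^m : ℝ) : ℂ)‖ / ‖(z + ((u*A + (1-u)*B : ℝ) : ℂ))^(m+2)‖ ≤ 1 :=
      div_le_one_of_le₀ (le_trans h1 h2) (by linarith)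
    have h4 : ‖-((m:ℂ)+1)‖ = (m:ℝ)+1 := by
      rw [norm_neg]
      have : ((m:ℂ)+1) = (((m:ℝ)+1 : ℝ) : ℂ) := by push_cast; ring
      rw [this, Complex.norm_real, Real.norm_eq_abs, abs_of_nonneg (by positivity)]
    calc ‖-((m:ℂ)+1)‖ * (‖(((u*(1-u))^m : ℝ) : ℂ)‖ / ‖(z + ((u*A + (1-u)*B : ℝ) : ℂ))^(m+2)‖)
        ≤ ‖-((m:ℂ)+1)‖ * 1 := mul_le_mul_of_nonneg_left h3 (norm_nonneg _)
      _ = (m:ℝ)+1 := by rw [h4, mul_one]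
  · exact (MeasureTheory.integrableOn_const (by simp [Real.volume_Ioo]))
  · filter_upwards [ae_restrict_mem measurableSet_Ioo] with u hu
    intro z hz
    have hz2 := hball z hz
    have hu' : u ∈ Icc (0:ℝ) 1 := Ioo_subset_Icc_self hu
    set c : ℂ := ((u*A + (1-u)*B : ℝ) : ℂ) with hc
    obtain ⟨-, hne⟩ := hlb z hz2 u hu'
    have h1 : HasDerivAt (fun z : ℂ => (z + c)^(m+1)) (((m:ℂ)+1)*(z+c)^m) z := by
      simpa using ((hasDerivAt_id z).add_const c).fun_pow (m+1)
    have h2 := (h1.fun_inv (pow_ne_zero _ hne)).const_mul ((((u*(1-u))^m : ℝ) : ℂ))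
    have e : (((u*(1-u))^m : ℝ) : ℂ) * (-(((m:ℂ)+1)*(z+c)^m) / ((z+c)^(m+1))^2)
        = -((m:ℂ)+1) * ((((u*(1-u))^m : ℝ) : ℂ) / (z + c)^(m+2)) := by
      have hne' : z + c ≠ 0 := hne
      field_simp
      ring
    rw [← e]
    simpa only [div_eq_mul_inv] using h2

lemma contDiffOn_gfn (m : ℕ) (hA : 0 ≤ A) (hB : 0 ≤ B) (d : ℝ) :
    ContDiffOn ℝ (⊤ : ℕ∞) (gfn m A B d) (Ioi (2:ℝ)) := by
  have hopen : IsOpen {z : ℂ | 2 < z.re} := isOpen_lt continuous_const Complex.continuous_re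
  have h1 : AnalyticOnNhd ℂ (gC m A B d) {z : ℂ | 2 < z.re} :=
    (diffOn_gC m hA hB d).analyticOnNhd hopen
  have h2 : AnalyticOnNhd ℝ (gC m A B d) {z : ℂ | 2 < z.re} := h1.restrictScalars
  have h3 : AnalyticOnNhd ℝ (fun T : ℝ => (T : ℂ)) (Ioi 2) := by
    have := Complex.ofRealCLM.analyticOnNhd (Ioi (2:ℝ))
    exact this
  have h4 : AnalyticOnNhd ℝ ((gC m A B d) ∘ (fun T : ℝ => (T : ℂ))) (Ioi 2) := by
    apply h2.comp h3
    intro T hT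
    simpa using (hT : (2:ℝ) < T)
  have h5 : AnalyticOnNhd ℝ (Complex.reCLM ∘ (gC m A B d) ∘ (fun T : ℝ => (T : ℂ)))
      (Ioi 2) := by
    apply (Complex.reCLM.analyticOnNhd univ).comp h4 (mapsTo_univ _ _)
  have h6 : ContDiffOn ℝ (⊤ : ℕ∞) (Complex.reCLM ∘ (gC m A B d) ∘ (fun T : ℝ => (T : ℂ)))
      (Ioi 2) := h5.contDiffOn_of_completeSpace
  apply h6.congr
  intro T hT
  simp only [Function.comp_apply, gC_ofReal m A B d T]
  simp

lemma image_Ioo_eq {f : ℝ → ℝ} {x y : ℝ} (hxy : x ≤ y) (hc : ContinuousOn f (Icc x y))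
    (hm : StrictMonoOn f (Icc x y)) : f '' Ioo x y = Ioo (f x) (f y) := by
  apply Subset.antisymm
  · rintro _ ⟨v, hv, rfl⟩
    exact ⟨hm (left_mem_Icc.2 hxy) (Ioo_subset_Icc_self hv) hv.1,
      hm (Ioo_subset_Icc_self hv) (right_mem_Icc.2 hxy) hv.2⟩
  · exact intermediate_value_Ioo hxy hc

lemma beta_Ioo (m : ℕ) : (∫ x in Ioo (0:ℝ) 1, (x*(1-x))^m)
    = (Nat.factorial m * Nat.factorial m : ℝ) / (Nat.factorial (2*m+1)) := by
  have h0 := beta_nat m m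
  rw [intervalIntegral.integral_of_le zero_le_one, integral_Ioc_eq_integral_Ioo] at h0
  have e : ∀ x : ℝ, (x*(1-x))^m = x^m * (1-x)^m := fun x => mul_pow _ _ _
  simp only [e]
  rw [h0, show m+m+1 = 2*m+1 from by omega]

lemma prodfac (m : ℕ) : ∀ n : ℕ,
    (Nat.factorial m) * ∏ i ∈ Finset.range n, (m+1+i) = Nat.factorial (m+n) := by
  intro n
  induction n with
  | zero => simp
  | succ n ih =>
    rw [Finset.prod_range_succ, ← mul_assoc, ih, show m + (n+1) = (m+n)+1 from rfl,
      Nat.factorial_succ]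
    ring

lemma subst2 (m : ℕ) {A B T : ℝ} (hA : 0 < A) (hB : 0 < B) (hT : 0 < T) :
    Ifn m (2*m+2) A B T = ((Nat.factorial m * Nat.factorial m : ℝ)/(Nat.factorial (2*m+1)))
      / ((T+A)^(m+1) * (T+B)^(m+1)) := by
  have hTA : 0 < T + A := by linarith
  have hTB : 0 < T + B := by linarith
  set z : ℝ → ℝ := fun u => u*(T+A)/(T + (u*A + (1-u)*B)) with hzdef
  have hL : ∀ u ∈ Icc (0:ℝ) 1, 0 < T + (u*A + (1-u)*B) := fun u hu => Lpos hA.le hB.le hT hu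
  have hDer : ∀ u : ℝ, u ∈ Icc (0:ℝ) 1 →
      HasDerivAt z ((T+A)*(T+B)/(T + (u*A + (1-u)*B))^2) u := by
    intro u hu
    have hden : HasDerivAt (fun u : ℝ => T + (u*A + (1-u)*B)) (A-B) u := by
      have h1 : HasDerivAt (fun u : ℝ => u*A) A u := by
        simpa using (hasDerivAt_id u).mul_const A
      have h2 : HasDerivAt (fun u : ℝ => (1-u)*B) (-B) u := by
        simpa using ((hasDerivAt_id u).const_sub 1).mul_const B
      have := (h1.add h2).const_add T
      simpa [sub_eq_add_neg] using this
    have hnum : HasDerivAt (fun u : ℝ => u*(T+A)) (T+A) u := by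
      simpa using (hasDerivAt_id u).mul_const (T+A)
    have h := hnum.fun_div hden (hL u hu).ne'
    refine h.congr_deriv ?_
    symm
    rw [div_eq_div_iff (pow_pos (hL u hu) 2).ne' (pow_pos (hL u hu) 2).ne']
    ring
  have hcont : ContinuousOn z (Icc 0 1) := by
    apply ContinuousOn.div (by fun_prop) (by fun_prop)
    exact fun u hu => (hL u hu).ne'
  have hmono : StrictMonoOn z (Icc 0 1) := by
    apply strictMonoOn_of_deriv_pos (convex_Icc 0 1) hcont
    intro u hu
    rw [interior_Icc] at hu
    rw [(hDer u (Ioo_subset_Icc_self hu)).deriv]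
    exact div_pos (mul_pos hTA hTB) (pow_pos (hL u (Ioo_subset_Icc_self hu)) 2)
  have hz0 : z 0 = 0 := by
    rw [hzdef]
    show (0:ℝ)*(T+A)/(T + (0*A + (1-0)*B)) = 0
    rw [zero_mul, zero_div]
  have hz1 : z 1 = 1 := by
    rw [hzdef]
    show (1:ℝ)*(T+A)/(T + (1*A + (1-1)*B)) = 1
    rw [one_mul, show T+((1:ℝ)*A+(1-1)*B) = T+A from by ring]
    exact div_self hTA.ne'

  have himg : z '' Ioo 0 1 = Ioo 0 1 := by
    rw [image_Ioo_eq zero_le_one hcont hmono, hz0, hz1]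
  have hbeta := beta_Ioo m
  rw [← himg] at hbeta
  rw [integral_image_eq_integral_abs_deriv_smul measurableSet_Ioo
    (fun u hu => (hDer u (Ioo_subset_Icc_self hu)).hasDerivWithinAt)
    ((hmono.mono Ioo_subset_Icc_self).injOn) _] at hbeta
  have hptw : ∀ u ∈ Ioo (0:ℝ) 1,
      |(T+A)*(T+B)/(T + (u*A + (1-u)*B))^2| • (z u * (1 - z u))^m
      = ((T+A)^(m+1)*(T+B)^(m+1)) * ((u*(1-u))^m / (T + (u*A + (1-u)*B))^(2*m+2)) := by
    intro u hu
    have hu' : u ∈ Icc (0:ℝ) 1 := Ioo_subset_Icc_self hu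
    have hLu := hL u hu'
    have e2 : 1 - z u = (1-u)*(T+B)/(T + (u*A + (1-u)*B)) := by
      show 1 - u*(T+A)/(T + (u*A + (1-u)*B)) = _
      field_simp
      ring
    have e1 : z u = u*(T+A)/(T + (u*A + (1-u)*B)) := rfl
    have e3 : z u * (1 - z u)
        = ((u*(1-u)) * ((T+A)*(T+B))) / (T + (u*A + (1-u)*B))^2 := by
      rw [e1, e2]
      field_simp
    rw [smul_eq_mul, abs_of_pos (div_pos (mul_pos hTA hTB) (pow_pos hLu 2)), e3, div_pow,
      mul_pow (u*(1-u)) ((T+A)*(T+B)) m, mul_pow (T+A) (T+B) m,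
      ← pow_mul, div_mul_div_comm, ← mul_div_assoc,
      div_eq_div_iff (by positivity : ((T + (u*A + (1-u)*B))^2 * (T + (u*A + (1-u)*B))^(2*m) : ℝ) ≠ 0)
        (by positivity : ((T + (u*A + (1-u)*B))^(2*m+2) : ℝ) ≠ 0)]
    ring
  rw [setIntegral_congr_fun measurableSet_Ioo hptw, MeasureTheory.integral_const_mul] at hbeta
  have hIfn : Ifn m (2*m+2) A B T
      = ∫ u in Ioo (0:ℝ) 1, (u*(1-u))^m / (T + (u*A + (1-u)*B))^(2*m+2) := rfl
  rw [hIfn, ← hbeta]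
  rw [mul_div_cancel_left₀ _ (mul_pos (pow_pos hTA _) (pow_pos hTB _)).ne']

lemma pow_alg (m : ℕ) {P Q W X Y b t δ : ℝ} (hb : b ≠ 0) (ht : t ≠ 0) (hδ : δ ≠ 0)
    (hX : X ≠ 0) (hY : Y ≠ 0) (hP : P ≠ 0) (hQ : Q ≠ 0) :
    δ^(2*m+1) * (P*Q/(b*δ*Y^2) * ((P*Q*W/(b*δ^2*Y^2))^m / (P*Q*X/(b*t*Y))^(m+1)))
    = t^(m+1) * W^m / (X^(m+1)*Y^(m+1)) := by
  rw [div_pow, div_pow]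
  field_simp
  ring

lemma subst1 (m : ℕ) {a b t : ℝ} (ha : 1 < a) (hb : 1 < b) (ht : 0 < t) :
    (∫ v in Ioo b⁻¹ b, t^(m+1) * ((b-v)*(v-b⁻¹))^m / ((v+t/a)^(m+1) * (v+a*t)^(m+1)))
    = (b-b⁻¹)^(2*m+1) * Ifn m (m+1) (a*b+(a*b)⁻¹) (a/b+b/a) (t+t⁻¹) := by
  have ha0 : (0:ℝ) < a := lt_trans one_pos ha
  have hb0 : (0:ℝ) < b := lt_trans one_pos hb
  have hbi : (0:ℝ) < b⁻¹ := inv_pos.2 hb0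
  have hbib : b⁻¹ < b := lt_trans (inv_lt_one_of_one_lt₀ hb) hb
  have hδ : (0:ℝ) < b - b⁻¹ := by linarith
  have hP : (0:ℝ) < b + a*t := by positivity
  have hQ : (0:ℝ) < 1 + a*b*t := by positivity
  have hYof : ∀ v : ℝ, v ∈ Icc b⁻¹ b → (0:ℝ) < v + a*t := by
    intro v hv
    have := hv.1
    nlinarith
  set φ : ℝ → ℝ := fun v => (b+a*t)*(v - b⁻¹)/((b-b⁻¹)*(v+a*t)) with hφdef
  have hDer : ∀ v : ℝ, v ∈ Icc b⁻¹ b →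
      HasDerivAt φ ((b+a*t)*(1+a*b*t)/(b*(b-b⁻¹)*(v+a*t)^2)) v := by
    intro v hv
    have hY := hYof v hv
    have hnum : HasDerivAt (fun v : ℝ => (b+a*t)*(v-b⁻¹)) (b+a*t) v := by
      simpa using ((hasDerivAt_id v).sub_const b⁻¹).const_mul (b+a*t)
    have hden : HasDerivAt (fun v : ℝ => (b-b⁻¹)*(v+a*t)) (b-b⁻¹) v := by
      simpa using ((hasDerivAt_id v).add_const (a*t)).const_mul (b-b⁻¹)
    have h := hnum.fun_div hden (by positivity : (b-b⁻¹)*(v+a*t) ≠ 0)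
    refine h.congr_deriv ?_
    symm
    rw [div_eq_div_iff (by positivity : (0:ℝ) < b*(b-b⁻¹)*(v+a*t)^2).ne'
      (by positivity : (0:ℝ) < ((b-b⁻¹)*(v+a*t))^2).ne']
    field_simp
    ring
  have hcont : ContinuousOn φ (Icc b⁻¹ b) := by
    apply ContinuousOn.div (by fun_prop) (by fun_prop)
    intro v hv
    have := hYof v hv
    positivity
  have hmono : StrictMonoOn φ (Icc b⁻¹ b) := by
    apply strictMonoOn_of_deriv_pos (convex_Icc _ _) hcont
    intro v hv
    rw [interior_Icc] at hv
    rw [(hDer v (Ioo_subset_Icc_self hv)).deriv]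
    have := hYof v (Ioo_subset_Icc_self hv)
    positivity
  have hφ0 : φ b⁻¹ = 0 := by
    rw [hφdef]
    show (b+a*t)*(b⁻¹ - b⁻¹)/((b-b⁻¹)*(b⁻¹+a*t)) = 0
    rw [sub_self, mul_zero, zero_div]
  have hφ1 : φ b = 1 := by
    rw [hφdef]
    show (b+a*t)*(b - b⁻¹)/((b-b⁻¹)*(b+a*t)) = 1
    rw [div_eq_one_iff_eq (by positivity)]
    ring
  have himg : φ '' Ioo b⁻¹ b = Ioo 0 1 := by
    rw [image_Ioo_eq hbib.le hcont hmono, hφ0, hφ1]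
  have hptw : ∀ v ∈ Ioo b⁻¹ b,
      t^(m+1) * ((b-v)*(v-b⁻¹))^m / ((v+t/a)^(m+1) * (v+a*t)^(m+1))
      = (b-b⁻¹)^(2*m+1) * (|(b+a*t)*(1+a*b*t)/(b*(b-b⁻¹)*(v+a*t)^2)| •
          ((φ v*(1-φ v))^m /
            ((t+t⁻¹) + (φ v*(a*b+(a*b)⁻¹) + (1-φ v)*(a/b+b/a)))^(m+1))) := by
    intro v hv
    have hv' : v ∈ Icc b⁻¹ b := Ioo_subset_Icc_self hv
    have hY := hYof v hv'
    have hX : (0:ℝ) < v + t/a := by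
      have := hv'.1
      have : (0:ℝ) < v := lt_of_lt_of_le hbi hv'.1
      positivity
    have hD : ((b-b⁻¹)*(v+a*t)) ≠ 0 := by positivity
    have h1 : (1 - (b+a*t)*(v - b⁻¹)/((b-b⁻¹)*(v+a*t)))
        = (((b-b⁻¹)*(v+a*t)) - (b+a*t)*(v-b⁻¹))/((b-b⁻¹)*(v+a*t)) := by
      rw [sub_div, div_self hD]
    have e1 : φ v * (1 - φ v)
        = (b+a*t)*(1+a*b*t)*((b-v)*(v-b⁻¹))/(b*(b-b⁻¹)^2*(v+a*t)^2) := by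
      rw [hφdef]
      show (b+a*t)*(v - b⁻¹)/((b-b⁻¹)*(v+a*t)) * (1 - (b+a*t)*(v - b⁻¹)/((b-b⁻¹)*(v+a*t))) = _
      rw [h1, div_mul_div_comm, div_eq_div_iff (by positivity) (by positivity)]
      field_simp
      ring
    have e2 : (t+t⁻¹) + (φ v*(a*b+(a*b)⁻¹) + (1-φ v)*(a/b+b/a))
        = (b+a*t)*(1+a*b*t)*(v+t/a)/(b*t*(v+a*t)) := by
      rw [hφdef]
      show (t+t⁻¹) + ((b+a*t)*(v - b⁻¹)/((b-b⁻¹)*(v+a*t))*(a*b+(a*b)⁻¹)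
        + (1 - (b+a*t)*(v - b⁻¹)/((b-b⁻¹)*(v+a*t)))*(a/b+b/a)) = _
      rw [h1, div_mul_eq_mul_div, div_mul_eq_mul_div, ← add_div,
        add_div' _ _ _ hD, div_eq_div_iff hD (by positivity : b*t*(v+a*t) ≠ 0)]
      field_simp
      ring
    rw [smul_eq_mul, abs_of_pos (by positivity), e1, e2]
    exact (pow_alg m hb0.ne' ht.ne' hδ.ne' hX.ne' hY.ne' hP.ne' hQ.ne').symm
  rw [setIntegral_congr_fun measurableSet_Ioo hptw]
  rw [MeasureTheory.integral_const_mul]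
  congr 1
  have himg' := integral_image_eq_integral_abs_deriv_smul measurableSet_Ioo
    (fun v hv => (hDer v (Ioo_subset_Icc_self hv)).hasDerivWithinAt)
    ((hmono.mono Ioo_subset_Icc_self).injOn)
    (fun x : ℝ => (x*(1-x))^m
      / ((t+t⁻¹) + (x*(a*b+(a*b)⁻¹) + (1-x)*(a/b+b/a)))^(m+1))
  rw [himg] at himg'
  exact himg'.symm

end JkCore

end JkAuxSection

/-- For integer k ≥ 1, a > 1, b > 1, the integral
J_k(t) = ∫_{1/b}^b t^k ((b−v)(v−b⁻¹))^(k−1)/((v+t/a)^k (v+at)^k) dv is a function g of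
T = t + t⁻¹ that is completely monotone on (2,∞), and its k-th derivative is
(−1)^k (k−1)! (b−b⁻¹)^(2k−1)/((T+A)^k (T+B)^k), where A = ab + (ab)⁻¹, B = a/b + b/a. -/
theorem Jk_is_CM_with_explicit_kth_derivative
    (k : ℕ) (hk : 1 ≤ k) (a b : ℝ) (ha : 1 < a) (hb : 1 < b) :
    ∃ g : ℝ → ℝ,
      (∀ t : ℝ, 0 < t →
        (∫ v in Set.Ioo b⁻¹ b,
          t ^ k * ((b - v) * (v - b⁻¹)) ^ (k - 1) / ((v + t / a) ^ k * (v + a * t) ^ k)) =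
          g (t + t⁻¹)) ∧
      CompletelyMonotoneOn g (Set.Ioi 2) ∧
      ∀ T : ℝ, 2 < T →
        iteratedDerivWithin k g (Set.Ioi 2) T =
          (-1 : ℝ) ^ k * (Nat.factorial (k - 1)) * (b - b⁻¹) ^ (2 * k - 1) /
            ((T + (a * b + (a * b)⁻¹)) ^ k * (T + (a / b + b / a)) ^ k) := by
  obtain ⟨m, rfl⟩ : ∃ m, k = m + 1 := ⟨k - 1, by omega⟩
  have ha0 : (0:ℝ) < a := lt_trans one_pos ha
  have hb0 : (0:ℝ) < b := lt_trans one_pos hb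
  have hA : (0:ℝ) < a*b + (a*b)⁻¹ := by positivity
  have hB : (0:ℝ) < a/b + b/a := by positivity
  have hδ : (0:ℝ) < b - b⁻¹ := by
    have : b⁻¹ < b := lt_trans (inv_lt_one_of_one_lt₀ hb) hb
    linarith
  have hd : (0:ℝ) ≤ (b - b⁻¹)^(2*m+1) := by positivity
  refine ⟨JkCore.gfn m (a*b + (a*b)⁻¹) (a/b + b/a) ((b - b⁻¹)^(2*m+1)), ?_, ⟨?_, ?_⟩, ?_⟩
  · intro t ht
    simp only [Nat.add_sub_cancel]
    exact JkCore.subst1 m ha hb ht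
  · exact JkCore.contDiffOn_gfn m hA.le hB.le _
  · intro n x hx
    rw [JkCore.iter_eq m hA.le hB.le ((b - b⁻¹)^(2*m+1)) n hx]
    have hs : (-1:ℝ)^n * (-1:ℝ)^n = 1 := by
      rw [← mul_pow]; norm_num
    have hI : 0 ≤ JkCore.Ifn m (m+1+n) (a*b + (a*b)⁻¹) (a/b + b/a) x :=
      JkCore.Ifn_nonneg (m := m) (m+1+n) hA.le hB.le
        (lt_trans two_pos (hx : (2:ℝ) < x))
    have hprod : (0:ℝ) ≤ ∏ i ∈ Finset.range n, ((m:ℝ)+1+(i:ℕ)) :=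
      Finset.prod_nonneg (fun i _ => by positivity)
    calc (0:ℝ) ≤ ((-1:ℝ)^n * (-1:ℝ)^n) * ((∏ i ∈ Finset.range n, ((m:ℝ)+1+(i:ℕ)))
          * ((b - b⁻¹)^(2*m+1)
          * JkCore.Ifn m (m+1+n) (a*b + (a*b)⁻¹) (a/b + b/a) x)) := by
          rw [hs, one_mul]
          positivity
      _ = (-1:ℝ)^n * ((-1:ℝ)^n * (∏ i ∈ Finset.range n, ((m:ℝ)+1+(i:ℕ)))
          * (b - b⁻¹)^(2*m+1)
          * JkCore.Ifn m (m+1+n) (a*b + (a*b)⁻¹) (a/b + b/a) x) := by ring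
  · intro T hT
    rw [JkCore.iter_eq m hA.le hB.le ((b - b⁻¹)^(2*m+1)) (m+1) hT]
    simp only [Nat.add_sub_cancel]
    rw [show m+1+(m+1) = 2*m+2 from by omega,
      JkCore.subst2 m hA hB (by linarith : (0:ℝ) < T),
      show 2*(m+1)-1 = 2*m+1 from by omega]
    have hfac : ((Nat.factorial m : ℝ)) * (∏ i ∈ Finset.range (m+1), ((m:ℝ)+1+(i:ℕ)))
        = ((Nat.factorial (2*m+1) : ℝ)) := by
      have h := JkCore.prodfac m (m+1)
      rw [show m+(m+1) = 2*m+1 from by omega] at h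
      exact_mod_cast h
    have h1 : ((Nat.factorial (2*m+1) : ℝ)) ≠ 0 := by positivity
    have key : (∏ i ∈ Finset.range (m+1), ((m:ℝ)+1+(i:ℕ)))
        * ((Nat.factorial m * Nat.factorial m : ℝ)/((Nat.factorial (2*m+1) : ℝ)))
        = (Nat.factorial m : ℝ) := by
      rw [mul_div_assoc', div_eq_iff h1]
      linear_combination ((Nat.factorial m : ℝ)) * hfac
    linear_combination ((-1:ℝ)^(m+1) * ((b - b⁻¹)^(2*m+1))
      / ((T + (a*b + (a*b)⁻¹))^(m+1) * (T + (a/b + b/a))^(m+1))) * key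

end
end
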